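/- arXiv:2503.13382 — 10 statements merged into one kernel-verified Lean document; each statement's English description precedes it below -/
import Mathlib

section
/- If G is a slightly regular network (i.e., the vector w = k - (vol(G)/n)·1 is an eigenvector of the combinatorial Laplacian L_G with eigenvalue γ), then Kemeny's constant satisfies K(G) = tr(L_G^# D) - (γ^#/vol(G))·(‖k‖² - vol(G)²/n), where γ^# = 1/γ if γ ≠ 0 and 0 otherwise. -/
open Matrix Finset

/-!
Write `k = w + (vol/n)·𝟙`. The Laplacian kills `𝟙`, hence so does its group inverse `L^#`,
and `L^#` acts on the `γ`-eigenvector `w` of `L` as multiplication by `γ^#`, which is `γ⁻¹`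
with Lean's convention `0⁻¹ = 0`. So `kᵀ L^# k = γ^# kᵀ w = γ^# (‖k‖² - vol²/n)`.
-/

namespace Matrix

variable {m K : Type*} [Fintype m] [Field K]

structure IsGroupInverse (A G : Matrix m m K) : Prop where
  mul_inv_mul : A * G * A = A
  inv_mul_inv : G * A * G = G
  comm : A * G = G * A

namespace IsGroupInverse

variable {A G : Matrix m m K} {v : m → K}

theorem mulVec_eq_zero (hG : IsGroupInverse A G) (hv : A *ᵥ v = 0) : G *ᵥ v = 0 := by
  rw [← hG.inv_mul_inv, Matrix.mul_assoc, hG.comm, ← Matrix.mul_assoc, ← mulVec_mulVec,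
    hv, mulVec_zero]

theorem mul_mulVec_of_mem_range (hG : IsGroupInverse A G) (u : m → K) :
    (G * A) *ᵥ (A *ᵥ u) = A *ᵥ u := by
  rw [mulVec_mulVec, ← hG.comm, hG.mul_inv_mul]

theorem mulVec_eq_inv_smul (hG : IsGroupInverse A G) {γ : K} (hv : A *ᵥ v = γ • v) :
    G *ᵥ v = γ⁻¹ • v := by
  rcases eq_or_ne γ 0 with rfl | hγ
  · simp only [_root_.inv_zero, zero_smul] at hv ⊢
    exact hG.mulVec_eq_zero hv
  · have hfix : (G * A) *ᵥ v = v := by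
      have hv' : v = A *ᵥ (γ⁻¹ • v) := by
        rw [mulVec_smul, hv, smul_smul, inv_mul_cancel₀ hγ, one_smul]
      rw [hv', hG.mul_mulVec_of_mem_range]
    calc G *ᵥ v = γ⁻¹ • (G * A) *ᵥ v := by
          rw [← mulVec_mulVec, hv, mulVec_smul, smul_smul, inv_mul_cancel₀ hγ, one_smul]
      _ = γ⁻¹ • v := by rw [hfix]

end IsGroupInverse

theorem diagonal_sub_mulVec_one {R : Type*} [Ring R] [DecidableEq m] {c : Matrix m m R}
    {k : m → R}
    (hk : ∀ i, k i = ∑ j, c i j) : (diagonal k - c) *ᵥ 1 = 0 := by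
  ext i
  simp [mulVec, dotProduct, diagonal_apply, ← hk i]

end Matrix

theorem kemeny_slightly_regular_general {n : ℕ}
    (c : Matrix (Fin n) (Fin n) ℝ)
    (k : Fin n → ℝ) (hk : ∀ i, k i = ∑ j, c i j)
    (vol : ℝ) (hvol : vol = ∑ i, k i)
    (L Lp : Matrix (Fin n) (Fin n) ℝ)
    (hL : L = Matrix.diagonal k - c)
    (hg1 : L * Lp * L = L) (hg2 : Lp * L * Lp = Lp) (hg3 : L * Lp = Lp * L)
    (w : Fin n → ℝ) (hw : w = fun i => k i - vol / n)
    (γ : ℝ) (heig : L.mulVec w = γ • w) :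
    (Lp * Matrix.diagonal k).trace - (1 / vol) * (k ⬝ᵥ Lp.mulVec k)
      = (Lp * Matrix.diagonal k).trace
        - ((if γ = 0 then (0:ℝ) else 1/γ) / vol) * ((∑ i, (k i)^2) - vol^2 / n) := by
  have hG : IsGroupInverse L Lp := ⟨hg1, hg2, hg3⟩
  have hLp_one : Lp *ᵥ 1 = 0 := hG.mulVec_eq_zero (hL ▸ diagonal_sub_mulVec_one hk)
  have hk_split : k = w + (vol / n) • 1 := by
    ext i
    simp [hw]
  have hLpk : Lp *ᵥ k = γ⁻¹ • w := by
    rw [hk_split, mulVec_add, mulVec_smul, hLp_one, smul_zero, add_zero,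
      hG.mulVec_eq_inv_smul heig]
  have hkw : k ⬝ᵥ w = ∑ i, k i ^ 2 - vol ^ 2 / n := by
    simp only [hw, dotProduct, mul_sub, Finset.sum_sub_distrib, ← Finset.sum_mul, ← hvol, ← sq]
    ring
  have hγ_sharp : (if γ = 0 then (0:ℝ) else 1 / γ) = γ⁻¹ := by
    split_ifs with hγ <;> simp [hγ]
  rw [hLpk, dotProduct_smul, hkw, smul_eq_mul, hγ_sharp]
  ring

/-- If `G` is a slightly regular network (`w = k - (vol/n)·1` is an eigenvector of the
combinatorial Laplacian `L = D - c` with eigenvalue `γ`), then Kemeny's constant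
`K(G) = tr(L^# D) - (1/vol) kᵀ L^# k` equals
`tr(L^# D) - (γ^#/vol)(‖k‖² - vol²/n)`, where `γ^# = 1/γ` if `γ ≠ 0` and `0` otherwise. -/
theorem kemeny_slightly_regular {n : ℕ} (hn : 0 < n)
    (c : Matrix (Fin n) (Fin n) ℝ) (hsym : c.IsSymm) (hnonneg : ∀ i j, 0 ≤ c i j)
    (k : Fin n → ℝ) (hk : ∀ i, k i = ∑ j, c i j)
    (vol : ℝ) (hvol : vol = ∑ i, k i) (hvolpos : 0 < vol)
    (L Lp : Matrix (Fin n) (Fin n) ℝ)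
    (hL : L = Matrix.diagonal k - c)
    (hg1 : L * Lp * L = L) (hg2 : Lp * L * Lp = Lp) (hg3 : L * Lp = Lp * L)
    -- connectivity: the kernel of the Laplacian is spanned by the all-ones vector
    (hconn : ∀ z : Fin n → ℝ, L.mulVec z = 0 ↔ ∃ t : ℝ, z = fun _ => t)
    (w : Fin n → ℝ) (hw : w = fun i => k i - vol / n)
    (γ : ℝ) (heig : L.mulVec w = γ • w) :
    (Lp * Matrix.diagonal k).trace - (1 / vol) * (k ⬝ᵥ Lp.mulVec k)
      = (Lp * Matrix.diagonal k).trace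
        - ((if γ = 0 then (0:ℝ) else 1/γ) / vol) * ((∑ i, (k i)^2) - vol^2 / n) :=
  kemeny_slightly_regular_general c k hk vol hvol L Lp hL hg1 hg2 hg3 w hw γ heig
end

section
/- Let G = (V_0 ∪ V_1, E, c) be a (k_0,k_1)-semiregular network such that every vertex i ∈ V_0 satisfies Σ_{j∈V_0} c(i,j) = r_0 (hence Σ_{j∈V_1} c(i,j) = k_0 - r_0), and every vertex i ∈ V_1 satisfies Σ_{j∈V_1} c(i,j) = r_1 (hence Σ_{j∈V_0} c(i,j) = k_1 - r_1). Then the vector w = k - (vol(G)/n)·1 is an eigenvector of the combinatorial Laplacian with eigenvalue γ = (n/n_0)(k_1 - r_1) = (n/n_1)(k_0 - r_0), where n_0 = |V_0|, n_1 = |V_1|, n = n_0 + n_1. -/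
/-!
For a vector equal to `x` on `V₀` and `y` on `V₁`, the Laplacian `L = diag k - c` gives
`(L w) i = (weight from i to the other part) * (jump)`, i.e. `(k₀ - r₀)(x - y)` on `V₀` and
`(k₁ - r₁)(y - x)` on `V₁`. Since `vol = n₀k₀ + n₁k₁`, the centred degrees are
`x = k₀ - vol/n = (n₁/n)(k₀ - k₁)` and `y = (n₀/n)(k₁ - k₀)`, so both parts give an eigenvalue,
and these agree because the symmetric cut weight counted from either side gives
`n₀(k₀ - r₀) = n₁(k₁ - r₁)`.
-/

open Matrix Finset

namespace Matrix

variable {ι R : Type*} [Fintype ι] [DecidableEq ι] [CommRing R]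

theorem laplacian_mulVec_apply (c : Matrix ι ι R) (w : ι → R) (i : ι) :
    (((diagonal fun i => ∑ j, c i j) - c) *ᵥ w) i = ∑ j, c i j * (w i - w j) := by
  rw [sub_mulVec, Pi.sub_apply, mulVec_diagonal, sum_mul]
  simp only [mul_sub, sum_sub_distrib]
  rfl

theorem sum_mul_sub_eq_of_eqOn_compl (c : Matrix ι ι R) {S : Finset ι} {w : ι → R} {i : ι}
    {y : R} (hS : ∀ j ∈ S, w j = w i) (hSc : ∀ j ∈ Sᶜ, w j = y) :
    ∑ j, c i j * (w i - w j) = (∑ j ∈ Sᶜ, c i j) * (w i - y) := by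
  rw [← sum_add_sum_compl S, sum_eq_zero fun j hj => by rw [hS j hj, sub_self, mul_zero],
    zero_add, sum_mul]
  exact sum_congr rfl fun j hj => by rw [hSc j hj]

theorem laplacian_mulVec_eq_smul_of_eqOn (c : Matrix ι ι R) {S : Finset ι} {w : ι → R}
    {x y a b γ : R} (hx : ∀ i ∈ S, w i = x) (hy : ∀ i ∈ Sᶜ, w i = y)
    (ha : ∀ i ∈ S, ∑ j ∈ Sᶜ, c i j = a) (hb : ∀ i ∈ Sᶜ, ∑ j ∈ S, c i j = b)
    (hxγ : a * (x - y) = γ * x) (hyγ : b * (y - x) = γ * y) :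
    ((diagonal fun i => ∑ j, c i j) - c) *ᵥ w = γ • w := by
  funext i
  rw [laplacian_mulVec_apply, Pi.smul_apply, smul_eq_mul]
  by_cases hi : i ∈ S
  · rw [sum_mul_sub_eq_of_eqOn_compl c (fun j hj => (hx j hj).trans (hx i hi).symm) hy, ha i hi,
      hx i hi, hxγ]
  · rw [← mem_compl] at hi
    rw [sum_mul_sub_eq_of_eqOn_compl c (fun j hj => (hy j hj).trans (hy i hi).symm)
      (fun j hj => hx j (by simpa using hj)), compl_compl, hb i hi, hy i hi, hyγ]

theorem IsSymm.card_mul_eq_card_compl_mul {c : Matrix ι ι R} (hc : c.IsSymm) {S : Finset ι}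
    {a b : R} (ha : ∀ i ∈ S, ∑ j ∈ Sᶜ, c i j = a) (hb : ∀ i ∈ Sᶜ, ∑ j ∈ S, c i j = b) :
    #S * a = #Sᶜ * b := by
  rw [← nsmul_eq_mul, ← nsmul_eq_mul, ← sum_eq_card_nsmul ha, ← sum_eq_card_nsmul hb]
  refine sum_comm.trans ?_
  exact sum_congr rfl fun j _ => sum_congr rfl fun i _ => (hc.apply i j).symm

end Matrix

theorem Finset.sum_eq_card_mul_add_card_compl_mul {ι R : Type*} [Fintype ι] [DecidableEq ι]
    [Semiring R] {S : Finset ι} {f : ι → R} {a b : R} (ha : ∀ i ∈ S, f i = a)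
    (hb : ∀ i ∈ Sᶜ, f i = b) :
    ∑ i, f i = #S * a + #Sᶜ * b := by
  rw [← sum_add_sum_compl S, sum_eq_card_nsmul ha, sum_eq_card_nsmul hb, nsmul_eq_mul,
    nsmul_eq_mul]

theorem semiregular_slightly_regular_general {n : ℕ}
    (c : Matrix (Fin n) (Fin n) ℝ) (hsym : c.IsSymm)
    (V0 : Finset (Fin n))
    (n0 n1 : ℕ) (hn0 : n0 = V0.card) (hn1 : n1 = V0ᶜ.card)
    (hn0pos : 0 < n0) (hn1pos : 0 < n1)
    (k : Fin n → ℝ) (hk : ∀ i, k i = ∑ j, c i j)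
    (k0 k1 r0 r1 : ℝ)
    (hdeg0 : ∀ i ∈ V0, k i = k0) (hdeg1 : ∀ i ∈ V0ᶜ, k i = k1)
    (hr0 : ∀ i ∈ V0, ∑ j ∈ V0, c i j = r0)
    (hr1 : ∀ i ∈ V0ᶜ, ∑ j ∈ V0ᶜ, c i j = r1)
    (vol : ℝ) (hvol : vol = ∑ i, k i)
    (L : Matrix (Fin n) (Fin n) ℝ) (hL : L = Matrix.diagonal k - c)
    (w : Fin n → ℝ) (hw : w = fun i => k i - vol / n) :
    L.mulVec w = (((n : ℝ) / n0) * (k1 - r1)) • w ∧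
      ((n : ℝ) / n0) * (k1 - r1) = ((n : ℝ) / n1) * (k0 - r0) := by
  have hcross0 : ∀ i ∈ V0, ∑ j ∈ V0ᶜ, c i j = k0 - r0 := fun i hi =>
    eq_sub_of_add_eq' (by rw [← hr0 i hi, ← hdeg0 i hi, hk, sum_add_sum_compl])
  have hcross1 : ∀ i ∈ V0ᶜ, ∑ j ∈ V0, c i j = k1 - r1 := fun i hi =>
    eq_sub_of_add_eq' (by rw [← hr1 i hi, ← hdeg1 i hi, hk, sum_compl_add_sum])
  have hcut : (n0 : ℝ) * (k0 - r0) = n1 * (k1 - r1) := by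
    rw [hn0, hn1]; exact hsym.card_mul_eq_card_compl_mul hcross0 hcross1
  have hn : (n : ℝ) = n0 + n1 := by
    rw [hn0, hn1, ← Nat.cast_add, card_add_card_compl, Fintype.card_fin]
  have hvol' : vol = n0 * k0 + n1 * k1 := by
    rw [hvol, hn0, hn1]; exact sum_eq_card_mul_add_card_compl_mul hdeg0 hdeg1
  have hn0' : (n0 : ℝ) ≠ 0 := by positivity
  have hn1' : (n1 : ℝ) ≠ 0 := by positivity
  have hn' : (n0 : ℝ) + n1 ≠ 0 := by positivity
  have hγ : (n : ℝ) / n0 * (k1 - r1) = n / n1 * (k0 - r0) := by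
    rw [div_mul_eq_mul_div, div_mul_eq_mul_div, div_eq_div_iff hn0' hn1']
    linear_combination (n : ℝ) * hcut.symm
  refine ⟨?_, hγ⟩
  rw [hL, show diagonal k = diagonal fun i => ∑ j, c i j from congrArg _ (funext hk)]
  refine laplacian_mulVec_eq_smul_of_eqOn c (x := k0 - vol / n) (y := k1 - vol / n)
    (fun i hi => by simp only [hw, hdeg0 i hi]) (fun i hi => by simp only [hw, hdeg1 i hi])
    hcross0 hcross1 ?_ ?_
  · rw [hγ, hvol', hn]; field_simp; ring
  · rw [hvol', hn]; field_simp; ring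

/-- A `(k₀,k₁)`-semiregular network with constant within-part degree sums `r₀`, `r₁`
is slightly regular: `w = k - (vol/n)·1` is an eigenvector of the combinatorial Laplacian
with eigenvalue `γ = (n/n₀)(k₁ - r₁) = (n/n₁)(k₀ - r₀)`. -/
theorem semiregular_slightly_regular {n : ℕ}
    (c : Matrix (Fin n) (Fin n) ℝ) (hsym : c.IsSymm) (hnonneg : ∀ i j, 0 ≤ c i j)
    (V0 : Finset (Fin n))
    (n0 n1 : ℕ) (hn0 : n0 = V0.card) (hn1 : n1 = V0ᶜ.card)
    (hn0pos : 0 < n0) (hn1pos : 0 < n1)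
    (k : Fin n → ℝ) (hk : ∀ i, k i = ∑ j, c i j)
    (k0 k1 r0 r1 : ℝ)
    (hdeg0 : ∀ i ∈ V0, k i = k0) (hdeg1 : ∀ i ∈ V0ᶜ, k i = k1)
    (hr0 : ∀ i ∈ V0, ∑ j ∈ V0, c i j = r0)
    (hr1 : ∀ i ∈ V0ᶜ, ∑ j ∈ V0ᶜ, c i j = r1)
    (vol : ℝ) (hvol : vol = ∑ i, k i)
    (L : Matrix (Fin n) (Fin n) ℝ) (hL : L = Matrix.diagonal k - c)
    (w : Fin n → ℝ) (hw : w = fun i => k i - vol / n) :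
    L.mulVec w = (((n : ℝ) / n0) * (k1 - r1)) • w ∧
      ((n : ℝ) / n0) * (k1 - r1) = ((n : ℝ) / n1) * (k0 - r0) :=
  semiregular_slightly_regular_general c hsym V0 n0 n1 hn0 hn1 hn0pos hn1pos k hk k0 k1 r0 r1 hdeg0
    hdeg1 hr0 hr1 vol hvol L hL w hw
end

section
/- Kemeny's constant of the complete bipartite graph K_{p,q} equals p + q - 3/2. -/
open Matrix Finset

/-- Trace of a Hermitian real matrix is the sum of its eigenvalues. -/
lemma aux_trace_eig {n : Type*} [Fintype n] [DecidableEq n]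
    (M : Matrix n n ℝ) (hM : M.IsHermitian) :
    M.trace = ∑ i, hM.eigenvalues i ∧ (M * M).trace = ∑ i, (hM.eigenvalues i) ^ 2 := by
  set U : Matrix n n ℝ := (hM.eigenvectorUnitary : Matrix n n ℝ) with hUdef
  set D : Matrix n n ℝ := Matrix.diagonal hM.eigenvalues with hDdef
  have hU : star U * U = 1 := Unitary.coe_star_mul_self hM.eigenvectorUnitary
  have hsp : M = U * D * star U := by
    have := hM.spectral_theorem
    simpa [RCLike.ofReal_real_eq_id, hUdef, hDdef] using this
  constructor
  · have ht : M.trace = (U * D * star U).trace := by rw [← hsp]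
    rw [ht, Matrix.trace_mul_cycle, hU, one_mul, hDdef, Matrix.trace_diagonal]
  · have h2 : M * M = U * (D * D) * star U := by
      rw [hsp]
      calc (U * D * star U) * (U * D * star U)
          = U * D * (star U * U) * D * star U := by noncomm_ring
        _ = U * (D * D) * star U := by rw [hU]; noncomm_ring
    have ht : (M * M).trace = (U * (D * D) * star U).trace := by rw [← h2]
    rw [ht, Matrix.trace_mul_cycle, hU, one_mul, hDdef,
      Matrix.diagonal_mul_diagonal, Matrix.trace_diagonal]
    simp [pow_two]

/-- Kemeny's constant of the complete bipartite graph `K_{p,q}` equals `p + q - 3/2`.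
Here `K` is the sum of reciprocals of the nonzero eigenvalues of the normalized Laplacian
`N = I - D^{-1/2} A D^{-1/2}` (since `(0:ℝ)⁻¹ = 0`, summing `(μ i)⁻¹` over all `i` gives
exactly the sum over the nonzero eigenvalues). -/
theorem kemeny_completeBipartite (p q : ℕ) (hp : 0 < p) (hq : 0 < q)
    (A : Matrix (Fin p ⊕ Fin q) (Fin p ⊕ Fin q) ℝ)
    (hA : ∀ i j, A i j = if i.isLeft ≠ j.isLeft then 1 else 0)
    (k : Fin p ⊕ Fin q → ℝ) (hk : ∀ i, k i = ∑ j, A i j)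
    (N : Matrix (Fin p ⊕ Fin q) (Fin p ⊕ Fin q) ℝ)
    (hNdef : N = 1 - Matrix.of (fun i j => A i j / (Real.sqrt (k i) * Real.sqrt (k j))))
    (hN : N.IsHermitian) :
    ∑ i, (hN.eigenvalues i)⁻¹ = (p : ℝ) + q - 3/2 := by
  have hp' : (0:ℝ) < p := by exact_mod_cast hp
  have hq' : (0:ℝ) < q := by exact_mod_cast hq
  set B : Matrix (Fin p ⊕ Fin q) (Fin p ⊕ Fin q) ℝ :=
    Matrix.of (fun i j => A i j / (Real.sqrt (k i) * Real.sqrt (k j))) with hBdef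
  set s : ℝ := Real.sqrt p * Real.sqrt q with hsdef
  have hs : s * s = (p : ℝ) * q := by
    rw [hsdef]
    rw [show Real.sqrt p * Real.sqrt q * (Real.sqrt p * Real.sqrt q)
        = (Real.sqrt p * Real.sqrt p) * (Real.sqrt q * Real.sqrt q) by ring,
      Real.mul_self_sqrt hp'.le, Real.mul_self_sqrt hq'.le]
  have hs0 : s ≠ 0 := by
    intro h
    rw [h, zero_mul] at hs
    exact absurd hs.symm (by positivity)
  -- degrees
  have hkl : ∀ a : Fin p, k (Sum.inl a) = q := by
    intro a
    rw [hk, Fintype.sum_sum_type]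
    simp [hA, Fintype.sum_sum_type, Finset.filter_eq_self]
  have hkr : ∀ b : Fin q, k (Sum.inr b) = p := by
    intro b
    rw [hk, Fintype.sum_sum_type]
    simp [hA, Fintype.sum_sum_type, Finset.filter_eq_self]
  -- entries of B
  have hBe : ∀ i j, B i j = if i.isLeft ≠ j.isLeft then s⁻¹ else 0 := by
    intro i j
    rcases i with a | a <;> rcases j with b | b <;>
      simp [hBdef, hA, hkl, hkr, hsdef, one_div, mul_comm]
  -- B squared
  have hB2 : B * B = Matrix.of (fun i j =>
      if i.isLeft = j.isLeft then (if i.isLeft then (p:ℝ)⁻¹ else (q:ℝ)⁻¹) else 0) := by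
    have hss : s⁻¹ * s⁻¹ = ((p:ℝ) * q)⁻¹ := by rw [← mul_inv, hs]
    ext i j
    rw [Matrix.mul_apply]
    rcases i with a | a <;> rcases j with b | b <;>
      simp only [hBe, Fintype.sum_sum_type, Sum.isLeft_inl, Sum.isLeft_inr] <;>
      simp [hss, Finset.sum_const] <;>
      field_simp <;> ring
  -- B cubed equals B
  have hB3 : B * (B * B) = B := by
    rw [hB2]
    ext i j
    rw [Matrix.mul_apply]
    rcases i with a | a <;> rcases j with b | b <;>
      simp only [hBe, Fintype.sum_sum_type, Sum.isLeft_inl, Sum.isLeft_inr, Matrix.of_apply] <;>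
      simp [Finset.sum_const] <;>
      field_simp <;> ring
  -- the cubic matrix identity
  have key : N * N * N + (N + N) - (N * N + N * N + N * N) = 0 := by
    have expand : (1 - B) * (1 - B) * (1 - B) + ((1 - B) + (1 - B))
        - ((1 - B) * (1 - B) + (1 - B) * (1 - B) + (1 - B) * (1 - B))
        = B - B * (B * B) := by noncomm_ring
    rw [hNdef, expand, hB3, sub_self]
  -- each eigenvalue satisfies μ(μ-1)(μ-2) = 0
  have hcubic : ∀ i, hN.eigenvalues i * (hN.eigenvalues i - 1) * (hN.eigenvalues i - 2) = 0 := by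
    intro i
    set μ : ℝ := hN.eigenvalues i with hμ
    set v : Fin p ⊕ Fin q → ℝ := ⇑(hN.eigenvectorBasis i) with hv
    have h1 : N *ᵥ v = μ • v := hN.mulVec_eigenvectorBasis i
    have h2 : (N * N) *ᵥ v = (μ * μ) • v := by
      rw [← Matrix.mulVec_mulVec, h1, Matrix.mulVec_smul, h1, smul_smul]
    have h3 : (N * N * N) *ᵥ v = (μ * μ * μ) • v := by
      rw [← Matrix.mulVec_mulVec, h1, Matrix.mulVec_smul, h2, smul_smul]
      ring_nf
    have hv0 : v ≠ 0 := by
      intro h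
      apply hN.eigenvectorBasis.orthonormal.ne_zero i
      ext j
      exact congrFun h j
    have happ := congrArg (fun M => M *ᵥ v) key
    simp only [Matrix.add_mulVec, Matrix.sub_mulVec, Matrix.zero_mulVec, h1, h2, h3] at happ
    have hsc : (μ * μ * μ + (μ + μ) - (μ * μ + μ * μ + μ * μ)) • v = 0 := by
      simp only [sub_smul, add_smul]
      exact happ
    rcases smul_eq_zero.mp hsc with h | h
    · linear_combination h
    · exact absurd h hv0
  -- traces
  have htr := aux_trace_eig N hN
  have trN : N.trace = (p : ℝ) + q := by
    have hNe : ∀ i, N i i = 1 := by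
      intro i
      rw [hNdef]
      rcases i with a | a <;> simp [hBe, hA, Matrix.one_apply]
    unfold Matrix.trace
    simp only [Matrix.diag, hNe]
    simp [Fintype.sum_sum_type]
  have trB : B.trace = 0 := by
    unfold Matrix.trace
    simp [Matrix.diag, hBe]
  have trB2 : (B * B).trace = 2 := by
    rw [hB2]
    unfold Matrix.trace
    simp only [Matrix.diag, Matrix.of_apply]
    rw [Fintype.sum_sum_type]
    simp only [Sum.isLeft_inl, Sum.isLeft_inr, if_true, if_false, ite_self]
    simp [Finset.sum_const]
    field_simp
    ring
  have trN2 : (N * N).trace = (p : ℝ) + q + 2 := by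
    have hNN : N * N = 1 - B - B + B * B := by rw [hNdef]; noncomm_ring
    rw [hNN, Matrix.trace_add, Matrix.trace_sub, Matrix.trace_sub, Matrix.trace_one, trB, trB2]
    simp [Fintype.card_sum]
  have hsum1 : ∑ i, hN.eigenvalues i = (p : ℝ) + q := by rw [← htr.1, trN]
  have hsum2 : ∑ i, (hN.eigenvalues i) ^ 2 = (p : ℝ) + q + 2 := by rw [← htr.2, trN2]
  -- pointwise: μ⁻¹ = (7μ - 3μ²)/4
  have hpt : ∀ i, (hN.eigenvalues i)⁻¹
      = (7 * hN.eigenvalues i - 3 * (hN.eigenvalues i) ^ 2) / 4 := by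
    intro i
    rcases mul_eq_zero.mp (hcubic i) with h | h
    · rcases mul_eq_zero.mp h with h | h
      · rw [h]; norm_num
      · have h1 : hN.eigenvalues i = 1 := by linarith
        rw [h1]; norm_num
    · have h2 : hN.eigenvalues i = 2 := by linarith
      rw [h2]; norm_num
  calc ∑ i, (hN.eigenvalues i)⁻¹
      = ∑ i, (7 * hN.eigenvalues i - 3 * (hN.eigenvalues i) ^ 2) / 4 :=
        Finset.sum_congr rfl (fun i _ => hpt i)
    _ = (7 * ∑ i, hN.eigenvalues i - 3 * ∑ i, (hN.eigenvalues i) ^ 2) / 4 := by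
        rw [← Finset.sum_div, Finset.sum_sub_distrib, ← Finset.mul_sum, ← Finset.mul_sum]
    _ = (p : ℝ) + q - 3/2 := by rw [hsum1, hsum2]; ring
end

section
/- Let G' be an ε-approximation of connected network G, let x_i = k_i e_iᵀ L_G^# e_i, x'_i = k_i e_iᵀ L_{G'}^# e_i, y = (1/vol(G)) kᵀ L_G^# k, and define K'' = Σ_i x'_i - y. Then K(G) - (ε/(1+ε))(K(G)+y) ≤ K'' ≤ K(G) + ε(K(G)+y). -/
open Matrix Finset

/-- Theorem 4.5(i): if `G'` is an `ε`-approximation of connected `G` (so the quadratic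
forms of the group inverses of the Laplacians agree up to factor `1+ε`), with
`xᵢ = kᵢ eᵢᵀ L_G^# eᵢ`, `x'ᵢ = kᵢ eᵢᵀ L_{G'}^# eᵢ`, `y = (1/vol) kᵀ L_G^# k`,
`K = ∑ xᵢ - y` (Kemeny's constant) and `K'' = ∑ x'ᵢ - y`, then
`K - (ε/(1+ε))(K+y) ≤ K'' ≤ K + ε(K+y)`. -/
theorem kemeny_approx_Kpp {n : ℕ} (ε : ℝ) (hε : 0 < ε)
    (k : Fin n → ℝ) (hk : ∀ i, 0 ≤ k i)
    (vol : ℝ) (hvol : vol = ∑ i, k i) (hvolpos : 0 < vol)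
    (Lp Lp' : Matrix (Fin n) (Fin n) ℝ)
    (hLp : Lp.PosSemidef) (hLp' : Lp'.PosSemidef)
    (happrox : ∀ z : Fin n → ℝ,
      (1/(1+ε)) * (z ⬝ᵥ Lp.mulVec z) ≤ z ⬝ᵥ Lp'.mulVec z ∧
        z ⬝ᵥ Lp'.mulVec z ≤ (1+ε) * (z ⬝ᵥ Lp.mulVec z))
    (x x' : Fin n → ℝ)
    (hx : ∀ i, x i = k i * ((Pi.single i 1 : Fin n → ℝ) ⬝ᵥ Lp.mulVec (Pi.single i 1)))
    (hx' : ∀ i, x' i = k i * ((Pi.single i 1 : Fin n → ℝ) ⬝ᵥ Lp'.mulVec (Pi.single i 1)))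
    (y K K'' : ℝ)
    (hy : y = (1/vol) * (k ⬝ᵥ Lp.mulVec k))
    (hK : K = (∑ i, x i) - y)
    (hK'' : K'' = (∑ i, x' i) - y) :
    K - (ε/(1+ε)) * (K + y) ≤ K'' ∧ K'' ≤ K + ε * (K + y) := by
  have h1ε : (0:ℝ) < 1 + ε := by linarith
  have hlo : ∀ i, (1/(1+ε)) * x i ≤ x' i := by
    intro i
    rw [hx, hx']
    have := (happrox (Pi.single i 1)).1
    have := mul_le_mul_of_nonneg_left this (hk i)
    nlinarith [this]
  have hhi : ∀ i, x' i ≤ (1+ε) * x i := by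
    intro i
    rw [hx, hx']
    have := (happrox (Pi.single i 1)).2
    have := mul_le_mul_of_nonneg_left this (hk i)
    nlinarith [this]
  have hKy : K + y = ∑ i, x i := by rw [hK]; ring
  have hsumlo : (1/(1+ε)) * ∑ i, x i ≤ ∑ i, x' i := by
    rw [Finset.mul_sum]; exact Finset.sum_le_sum fun i _ => hlo i
  have hsumhi : ∑ i, x' i ≤ (1+ε) * ∑ i, x i := by
    rw [Finset.mul_sum]; exact Finset.sum_le_sum fun i _ => hhi i
  constructor
  · rw [hK'', hKy, hK]
    have : (1/(1+ε)) * ∑ i, x i = (∑ i, x i) - (ε/(1+ε)) * ∑ i, x i := by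
      field_simp; ring
    linarith [hsumlo]
  · rw [hK'', hKy, hK]
    linarith [hsumhi]
end

section
/- Let G' be an ε-approximation of connected network G, and define K' = Σ_i x'_i - y' where x'_i = k_i e_iᵀ L_{G'}^# e_i and y' = (1/vol(G)) kᵀ L_{G'}^# k. Then K(G) - (ε/(1+ε))(K(G) + (2+ε)y) ≤ K' ≤ K(G) + ε(K(G) + ((2+ε)/(1+ε))y), where y = (1/vol(G)) kᵀ L_G^# k. -/
open Matrix Finset

/-!
Both bounds are exact algebraic rewritings of the trivial estimate. Writing `S = ∑ xᵢ`, so that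
`K = S - y`, one has `K - (ε/(1+ε))(K + (2+ε)y) = S/(1+ε) - (1+ε)y` and
`K + ε(K + ((2+ε)/(1+ε))y) = (1+ε)S - y/(1+ε)`. Since every `xᵢ` and `y` is a nonnegative multiple
of a value of the quadratic form of `L_G^#`, the approximation hypothesis gives
`S/(1+ε) ≤ S' ≤ (1+ε)S` and `y/(1+ε) ≤ y' ≤ (1+ε)y`, and `K' = S' - y'` lies between the two.
-/

section QuadraticForm

variable {ι : Type*} [Fintype ι] {M N : Matrix ι ι ℝ} {t : ℝ}

theorem smul_quadForm_le_of_forall_le (h : ∀ z : ι → ℝ, z ⬝ᵥ M *ᵥ z ≤ t * (z ⬝ᵥ N *ᵥ z))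
    {c : ℝ} (hc : 0 ≤ c) (z : ι → ℝ) : c * (z ⬝ᵥ M *ᵥ z) ≤ t * (c * (z ⬝ᵥ N *ᵥ z)) := by
  rw [mul_left_comm]
  exact mul_le_mul_of_nonneg_left (h z) hc

theorem sum_smul_diag_quadForm_le_of_forall_le [DecidableEq ι]
    (h : ∀ z : ι → ℝ, z ⬝ᵥ M *ᵥ z ≤ t * (z ⬝ᵥ N *ᵥ z)) {w : ι → ℝ} (hw : ∀ i, 0 ≤ w i) :
    ∑ i, w i * ((Pi.single i 1 : ι → ℝ) ⬝ᵥ M *ᵥ Pi.single i 1) ≤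
      t * ∑ i, w i * ((Pi.single i 1 : ι → ℝ) ⬝ᵥ N *ᵥ Pi.single i 1) := by
  rw [mul_sum]
  exact sum_le_sum fun i _ => smul_quadForm_le_of_forall_le h (hw i) _

end QuadraticForm

theorem sub_mem_Icc_of_le_mul {t S S' y y' : ℝ} (ht : 0 < t)
    (hS : S ≤ t * S') (hS' : S' ≤ t * S) (hy : y ≤ t * y') (hy' : y' ≤ t * y) :
    S' - y' ∈ Set.Icc (S / t - t * y) (t * S - y / t) := by
  have hSt : S / t ≤ S' := (div_le_iff₀' ht).2 hS
  have hyt : y / t ≤ y' := (div_le_iff₀' ht).2 hy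
  constructor <;> linarith

theorem sub_sub_div_mul_eq {ε : ℝ} (hε : 1 + ε ≠ 0) (S y : ℝ) :
    S - y - ε / (1 + ε) * (S - y + (2 + ε) * y) = S / (1 + ε) - (1 + ε) * y := by
  field_simp
  ring

theorem sub_add_mul_div_mul_eq {ε : ℝ} (hε : 1 + ε ≠ 0) (S y : ℝ) :
    S - y + ε * (S - y + (2 + ε) / (1 + ε) * y) = (1 + ε) * S - y / (1 + ε) := by
  field_simp
  ring

theorem kemeny_approx_Kp_general {n : ℕ} (ε : ℝ) (hε : 0 < ε)
    (k : Fin n → ℝ) (hk : ∀ i, 0 ≤ k i)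
    (vol : ℝ) (hvolpos : 0 < vol)
    (Lp Lp' : Matrix (Fin n) (Fin n) ℝ)
    (happrox : ∀ z : Fin n → ℝ,
      (1/(1+ε)) * (z ⬝ᵥ Lp.mulVec z) ≤ z ⬝ᵥ Lp'.mulVec z ∧
        z ⬝ᵥ Lp'.mulVec z ≤ (1+ε) * (z ⬝ᵥ Lp.mulVec z))
    (x x' : Fin n → ℝ)
    (hx : ∀ i, x i = k i * ((Pi.single i 1 : Fin n → ℝ) ⬝ᵥ Lp.mulVec (Pi.single i 1)))
    (hx' : ∀ i, x' i = k i * ((Pi.single i 1 : Fin n → ℝ) ⬝ᵥ Lp'.mulVec (Pi.single i 1)))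
    (y y' K K' : ℝ)
    (hy : y = (1/vol) * (k ⬝ᵥ Lp.mulVec k))
    (hy' : y' = (1/vol) * (k ⬝ᵥ Lp'.mulVec k))
    (hK : K = (∑ i, x i) - y)
    (hK' : K' = (∑ i, x' i) - y') :
    K - (ε/(1+ε)) * (K + (2+ε) * y) ≤ K' ∧
      K' ≤ K + ε * (K + ((2+ε)/(1+ε)) * y) := by
  have hε1 : 0 < 1 + ε := by linarith
  have hlow (z : Fin n → ℝ) : z ⬝ᵥ Lp *ᵥ z ≤ (1 + ε) * (z ⬝ᵥ Lp' *ᵥ z) :=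
    (div_le_iff₀' hε1).1 (by simpa only [one_div_mul_eq_div] using (happrox z).1)
  have hup (z : Fin n → ℝ) := (happrox z).2
  have hvol : 0 ≤ 1 / vol := by positivity
  simp only [funext hx, funext hx'] at hK hK'
  rw [hK, hK', hy, hy', sub_sub_div_mul_eq hε1.ne', sub_add_mul_div_mul_eq hε1.ne']
  exact sub_mem_Icc_of_le_mul hε1
    (sum_smul_diag_quadForm_le_of_forall_le hlow hk)
    (sum_smul_diag_quadForm_le_of_forall_le hup hk)
    (smul_quadForm_le_of_forall_le hlow hvol k) (smul_quadForm_le_of_forall_le hup hvol k)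

/-- Theorem 4.5(ii): if `G'` is an `ε`-approximation of connected `G` (so the quadratic
forms of the group inverses of the Laplacians agree up to factor `1+ε`), with
`x'ᵢ = kᵢ eᵢᵀ L_{G'}^# eᵢ`, `y = (1/vol) kᵀ L_G^# k`, `y' = (1/vol) kᵀ L_{G'}^# k`,
`K = ∑ xᵢ - y` (Kemeny's constant) and `K' = ∑ x'ᵢ - y'`, then
`K - (ε/(1+ε))(K+(2+ε)y) ≤ K' ≤ K + ε(K + ((2+ε)/(1+ε))y)`. -/
theorem kemeny_approx_Kp {n : ℕ} (ε : ℝ) (hε : 0 < ε)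
    (k : Fin n → ℝ) (hk : ∀ i, 0 ≤ k i)
    (vol : ℝ) (hvol : vol = ∑ i, k i) (hvolpos : 0 < vol)
    (Lp Lp' : Matrix (Fin n) (Fin n) ℝ)
    (hLp : Lp.PosSemidef) (hLp' : Lp'.PosSemidef)
    (happrox : ∀ z : Fin n → ℝ,
      (1/(1+ε)) * (z ⬝ᵥ Lp.mulVec z) ≤ z ⬝ᵥ Lp'.mulVec z ∧
        z ⬝ᵥ Lp'.mulVec z ≤ (1+ε) * (z ⬝ᵥ Lp.mulVec z))
    (x x' : Fin n → ℝ)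
    (hx : ∀ i, x i = k i * ((Pi.single i 1 : Fin n → ℝ) ⬝ᵥ Lp.mulVec (Pi.single i 1)))
    (hx' : ∀ i, x' i = k i * ((Pi.single i 1 : Fin n → ℝ) ⬝ᵥ Lp'.mulVec (Pi.single i 1)))
    (y y' K K' : ℝ)
    (hy : y = (1/vol) * (k ⬝ᵥ Lp.mulVec k))
    (hy' : y' = (1/vol) * (k ⬝ᵥ Lp'.mulVec k))
    (hK : K = (∑ i, x i) - y)
    (hK' : K' = (∑ i, x' i) - y') :
    K - (ε/(1+ε)) * (K + (2+ε) * y) ≤ K' ∧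
      K' ≤ K + ε * (K + ((2+ε)/(1+ε)) * y) :=
  kemeny_approx_Kp_general ε hε k hk vol hvolpos Lp Lp' happrox x x' hx hx' y y' K K' hy hy' hK hK'
end

section
/- For a connected graph G, Kemeny's constant satisfies tr(L_G^# D) - ‖w‖²/(γ_2 vol(G)) ≤ K(G) ≤ tr(L_G^# D) - ‖w‖²/(γ_n vol(G)), where w = k - (vol(G)/n)·1 and γ_2, γ_n are the smallest positive and largest eigenvalues of the combinatorial Laplacian. -/
open Matrix Finset

/-!
Writing `k = w + (vol/n)·1` with `w ⟂ 1`, and using that `L^#` kills `1` on both sides,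
`kᵀ L^# k = wᵀ u` for `u = L^# w`; connectivity makes `L^#` invert `L` on `1^⊥`, so `L u = w`.
Both bounds are then Cauchy–Schwarz. For the lower one, `(wᵀu)² ≤ ‖w‖² ‖u‖²` and
`γ₂ ‖u‖² ≤ uᵀ L u = wᵀ u`. For the upper one, in the semi-inner product `⟨x, y⟩_L = xᵀ L y`,
`‖w‖⁴ = ⟨w, u⟩_L² ≤ ⟨w, w⟩_L ⟨u, u⟩_L ≤ γₙ ‖w‖² wᵀu`.
-/

lemma mul_le_of_sq_le_mul {a b c γ : ℝ} (ha : 0 ≤ a) (hc : 0 ≤ c) (hγ : 0 ≤ γ)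
    (hbac : b ^ 2 ≤ a * c) (hcb : γ * c ≤ b) : γ * b ≤ a := by
  have hb : 0 ≤ b := (mul_nonneg hγ hc).trans hcb
  rcases hb.eq_or_lt with rfl | hb
  · simpa using ha
  · refine le_of_mul_le_mul_right ?_ hb
    nlinarith [mul_le_mul_of_nonneg_left hcb ha, mul_le_mul_of_nonneg_left hbac hγ]

section DotProduct

variable {ι : Type*} [Fintype ι]

lemma dotProduct_self_nonneg {R : Type*} [Ring R] [LinearOrder R] [IsStrictOrderedRing R]
    (v : ι → R) : 0 ≤ v ⬝ᵥ v :=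
  sum_nonneg fun i _ => mul_self_nonneg (v i)

lemma sq_dotProduct_mulVec_le {M : Matrix ι ι ℝ} (hM : M.IsSymm) {x y : ι → ℝ}
    (h : ∀ t : ℝ, 0 ≤ (x + t • y) ⬝ᵥ M *ᵥ (x + t • y)) :
    (x ⬝ᵥ M *ᵥ y) ^ 2 ≤ (x ⬝ᵥ M *ᵥ x) * (y ⬝ᵥ M *ᵥ y) := by
  have hyx : y ⬝ᵥ M *ᵥ x = x ⬝ᵥ M *ᵥ y := by
    rw [dotProduct_mulVec, ← mulVec_transpose, dotProduct_comm, hM.eq]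
  have hquad : ∀ t : ℝ,
      0 ≤ (y ⬝ᵥ M *ᵥ y) * (t * t) + 2 * (x ⬝ᵥ M *ᵥ y) * t + x ⬝ᵥ M *ᵥ x := fun t => by
    convert h t using 1
    simp only [mulVec_add, mulVec_smul, add_dotProduct, dotProduct_add, smul_dotProduct,
      dotProduct_smul, smul_eq_mul, hyx]
    ring
  have hdiscr := discrim_le_zero hquad
  rw [discrim] at hdiscr
  linarith

lemma mul_dotProduct_le_dotProduct_self_of_mulVec_eq {L : Matrix ι ι ℝ} {u w : ι → ℝ}
    {γ : ℝ} (hγ : 0 ≤ γ) (hu : γ * (u ⬝ᵥ u) ≤ u ⬝ᵥ L *ᵥ u) (hLu : L *ᵥ u = w) :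
    γ * (w ⬝ᵥ u) ≤ w ⬝ᵥ w := by
  have hCS : (w ⬝ᵥ u) ^ 2 ≤ (w ⬝ᵥ w) * (u ⬝ᵥ u) := by
    classical
    simpa only [one_mulVec] using sq_dotProduct_mulVec_le (isSymm_one (α := ℝ))
      fun t => by simpa only [one_mulVec] using dotProduct_self_nonneg _
  rw [hLu, dotProduct_comm u w] at hu
  exact mul_le_of_sq_le_mul (dotProduct_self_nonneg w) (dotProduct_self_nonneg u) hγ hCS hu

lemma inv_mul_dotProduct_self_le_of_mulVec_eq {L : Matrix ι ι ℝ} (hL : L.IsSymm)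
    {u w : ι → ℝ} (hpos : ∀ t : ℝ, 0 ≤ (w + t • u) ⬝ᵥ L *ᵥ (w + t • u))
    (hu : 0 ≤ u ⬝ᵥ L *ᵥ u) {γ : ℝ} (hγ : 0 < γ) (hw : w ⬝ᵥ L *ᵥ w ≤ γ * (w ⬝ᵥ w))
    (hLu : L *ᵥ u = w) :
    γ⁻¹ * (w ⬝ᵥ w) ≤ w ⬝ᵥ u := by
  have hCS := sq_dotProduct_mulVec_le hL hpos
  rw [hLu, mul_comm, dotProduct_comm u w] at hCS
  rw [hLu, dotProduct_comm] at hu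
  have hw0 : 0 ≤ w ⬝ᵥ L *ᵥ w := by simpa using hpos 0
  have hw' : γ⁻¹ * (w ⬝ᵥ L *ᵥ w) ≤ w ⬝ᵥ w := (inv_mul_le_iff₀ hγ).mpr hw
  exact mul_le_of_sq_le_mul hu hw0 (inv_nonneg.mpr hγ.le) hCS hw'

lemma dotProduct_mulVec_add_smul_one {R : Type*} [CommSemiring R] {G : Matrix ι ι R}
    (hG1 : G *ᵥ 1 = 0) (h1G : 1 ᵥ* G = 0) (w : ι → R) (s : R) :
    (w + s • 1) ⬝ᵥ G *ᵥ (w + s • 1) = w ⬝ᵥ G *ᵥ w := by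
  rw [mulVec_add, mulVec_smul, hG1, smul_zero, add_zero, add_dotProduct, smul_dotProduct,
    dotProduct_mulVec 1, h1G, zero_dotProduct, smul_zero, add_zero]

lemma laplacian_mulVec_one [DecidableEq ι] {R : Type*} [CommRing R] {c : Matrix ι ι R}
    {k : ι → R} (hk : ∀ i, k i = ∑ j, c i j) :
    (diagonal k - c) *ᵥ 1 = 0 := by
  ext i
  rw [sub_mulVec, Pi.sub_apply, mulVec_diagonal, hk]
  simp [mulVec, dotProduct]

end DotProduct

structure Matrix.IsGroupInverse_s13 {ι R : Type*} [Fintype ι] [Semiring R]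
    (L G : Matrix ι ι R) : Prop where
  mul_mul_left : L * G * L = L
  mul_mul_right : G * L * G = G
  commute : L * G = G * L

namespace Matrix.IsGroupInverse_s13

variable {ι : Type*} [Fintype ι]

lemma mulVec_eq_zero_s13 {R : Type*} [Semiring R] {L G : Matrix ι ι R} (hG : L.IsGroupInverse_s13 G)
    {v : ι → R} (hv : L *ᵥ v = 0) : G *ᵥ v = 0 := by
  have hGGL : G * G * L = G := by
    rw [Matrix.mul_assoc, ← hG.commute, ← Matrix.mul_assoc, hG.mul_mul_right]
  rw [← hGGL, ← mulVec_mulVec, hv, mulVec_zero]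

lemma vecMul_eq_zero {R : Type*} [Semiring R] {L G : Matrix ι ι R} (hG : L.IsGroupInverse_s13 G)
    {v : ι → R} (hv : v ᵥ* L = 0) : v ᵥ* G = 0 := by
  have hLGG : L * G * G = G := by rw [hG.commute, hG.mul_mul_right]
  rw [← hLGG, ← vecMul_vecMul, ← vecMul_vecMul, hv, zero_vecMul, zero_vecMul]

lemma mulVec_mulVec_of_sum_eq_zero {L G : Matrix ι ι ℝ} (hG : L.IsGroupInverse_s13 G)
    (hker : ∀ z : ι → ℝ, L *ᵥ z = 0 → ∃ t : ℝ, z = fun _ => t) (h1L : 1 ᵥ* L = 0)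
    {w : ι → ℝ} (hw : ∑ i, w i = 0) : L *ᵥ G *ᵥ w = w := by
  obtain ⟨t, ht⟩ := hker (L *ᵥ G *ᵥ w - w) (by
    rw [mulVec_sub, mulVec_mulVec, mulVec_mulVec, Matrix.mul_assoc, hG.commute,
      ← Matrix.mul_assoc, hG.mul_mul_left, sub_self])
  have hsum : ∑ i, (L *ᵥ G *ᵥ w - w) i = 0 := by
    rw [← one_dotProduct, dotProduct_sub, dotProduct_mulVec, h1L, zero_dotProduct,
      one_dotProduct, hw, sub_zero]
  refine sub_eq_zero.mp (funext fun i => ?_)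
  have : Nonempty ι := ⟨i⟩
  have hcard : (Fintype.card ι : ℝ) ≠ 0 := Nat.cast_ne_zero.mpr Fintype.card_ne_zero
  rw [ht] at hsum ⊢
  simpa only [sum_const, card_univ, nsmul_eq_mul, mul_eq_zero, hcard, false_or, Pi.zero_apply] using hsum

end Matrix.IsGroupInverse_s13

theorem kemeny_degree_bounds_general {n : ℕ} (hn : 0 < n)
    (c : Matrix (Fin n) (Fin n) ℝ) (hsym : c.IsSymm)
    (k : Fin n → ℝ) (hk : ∀ i, k i = ∑ j, c i j)
    (vol : ℝ) (hvol : vol = ∑ i, k i) (hvolpos : 0 < vol)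
    (L Lp : Matrix (Fin n) (Fin n) ℝ)
    (hL : L = Matrix.diagonal k - c)
    (hg1 : L * Lp * L = L) (hg2 : Lp * L * Lp = Lp) (hg3 : L * Lp = Lp * L)
    -- connectivity: the kernel of the Laplacian is spanned by the all-ones vector
    (hker : ∀ z : Fin n → ℝ, L.mulVec z = 0 ↔ ∃ t : ℝ, z = fun _ => t)
    (γ2 γn : ℝ) (hγ2pos : 0 < γ2) (hγnpos : 0 < γn)
    -- γ₂ is a lower bound of the quadratic form on the orthogonal complement of 1
    (hγ2 : ∀ z : Fin n → ℝ, (∑ i, z i) = 0 → γ2 * (z ⬝ᵥ z) ≤ z ⬝ᵥ L.mulVec z)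
    -- γₙ is the largest eigenvalue of L
    (hγn : ∀ z : Fin n → ℝ, z ⬝ᵥ L.mulVec z ≤ γn * (z ⬝ᵥ z))
    (w : Fin n → ℝ) (hw : w = fun i => k i - vol / n) :
    (Lp * Matrix.diagonal k).trace - (∑ i, (w i)^2) / (γ2 * vol)
        ≤ (Lp * Matrix.diagonal k).trace - (1/vol) * (k ⬝ᵥ Lp.mulVec k) ∧
      (Lp * Matrix.diagonal k).trace - (1/vol) * (k ⬝ᵥ Lp.mulVec k)
        ≤ (Lp * Matrix.diagonal k).trace - (∑ i, (w i)^2) / (γn * vol) := by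
  have hG : L.IsGroupInverse_s13 Lp := ⟨hg1, hg2, hg3⟩
  have hLsymm : L.IsSymm := hL ▸ (isSymm_diagonal k).sub hsym
  have hL1 : L *ᵥ 1 = 0 := hL ▸ laplacian_mulVec_one hk
  have h1L : 1 ᵥ* L = 0 := by rw [← mulVec_transpose, hLsymm.eq, hL1]
  have hw_sum : ∑ i, w i = 0 := by
    have hn' : (n : ℝ) ≠ 0 := Nat.cast_ne_zero.mpr hn.ne'
    simp [hw, sum_sub_distrib, ← hvol, mul_div_cancel₀ _ hn']
  set u := Lp *ᵥ w
  have hLu : L *ᵥ u = w := hG.mulVec_mulVec_of_sum_eq_zero (fun z => (hker z).1) h1L hw_sum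
  have hu_sum : ∑ i, u i = 0 := by
    rw [← one_dotProduct, dotProduct_mulVec, hG.vecMul_eq_zero h1L, zero_dotProduct]
  have hkLpk : k ⬝ᵥ Lp *ᵥ k = w ⬝ᵥ u := by
    have hkw : k = w + (vol / n) • 1 := by ext i; simp [hw]
    rw [hkw, dotProduct_mulVec_add_smul_one (hG.mulVec_eq_zero_s13 hL1) (hG.vecMul_eq_zero h1L)]
  have hL_nonneg : ∀ z, ∑ i, z i = 0 → 0 ≤ z ⬝ᵥ L *ᵥ z := fun z hz =>
    (mul_nonneg hγ2pos.le (dotProduct_self_nonneg z)).trans (hγ2 z hz)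
  have lower : γ2 * (w ⬝ᵥ u) ≤ w ⬝ᵥ w :=
    mul_dotProduct_le_dotProduct_self_of_mulVec_eq hγ2pos.le (hγ2 u hu_sum) hLu
  have upper : γn⁻¹ * (w ⬝ᵥ w) ≤ w ⬝ᵥ u := inv_mul_dotProduct_self_le_of_mulVec_eq hLsymm
    (fun t => hL_nonneg _ (by simp [sum_add_distrib, ← mul_sum, hw_sum, hu_sum]))
    (hL_nonneg u hu_sum) hγnpos (hγn w) hLu
  have hww : ∑ i, w i ^ 2 = w ⬝ᵥ w := by simp [dotProduct, sq]
  rw [hkLpk, hww]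
  constructor
  · refine sub_le_sub_left ?_ _
    rw [le_div_iff₀ (mul_pos hγ2pos hvolpos)]
    calc 1 / vol * (w ⬝ᵥ u) * (γ2 * vol) = γ2 * (w ⬝ᵥ u) := by field_simp
      _ ≤ w ⬝ᵥ w := lower
  · refine sub_le_sub_left ?_ _
    calc (w ⬝ᵥ w) / (γn * vol) = 1 / vol * (γn⁻¹ * (w ⬝ᵥ w)) := by field_simp
      _ ≤ 1 / vol * (w ⬝ᵥ u) := by gcongr

/-- Wang et al.'s bounds: for a connected graph,
`tr(L^# D) - ‖w‖²/(γ₂ vol) ≤ K(G) ≤ tr(L^# D) - ‖w‖²/(γₙ vol)`,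
where `w = k - (vol/n)·1`, `γ₂` and `γₙ` are the smallest positive and largest eigenvalues
of the combinatorial Laplacian, and `K(G) = tr(L^# D) - (1/vol) kᵀ L^# k`. -/
theorem kemeny_degree_bounds {n : ℕ} (hn : 0 < n)
    (c : Matrix (Fin n) (Fin n) ℝ) (hsym : c.IsSymm) (hnonneg : ∀ i j, 0 ≤ c i j)
    (k : Fin n → ℝ) (hk : ∀ i, k i = ∑ j, c i j)
    (vol : ℝ) (hvol : vol = ∑ i, k i) (hvolpos : 0 < vol)
    (L Lp : Matrix (Fin n) (Fin n) ℝ)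
    (hL : L = Matrix.diagonal k - c)
    (hg1 : L * Lp * L = L) (hg2 : Lp * L * Lp = Lp) (hg3 : L * Lp = Lp * L)
    -- connectivity: the kernel of the Laplacian is spanned by the all-ones vector
    (hker : ∀ z : Fin n → ℝ, L.mulVec z = 0 ↔ ∃ t : ℝ, z = fun _ => t)
    (γ2 γn : ℝ) (hγ2pos : 0 < γ2) (hγnpos : 0 < γn)
    -- γ₂ is a lower bound of the quadratic form on the orthogonal complement of 1
    (hγ2 : ∀ z : Fin n → ℝ, (∑ i, z i) = 0 → γ2 * (z ⬝ᵥ z) ≤ z ⬝ᵥ L.mulVec z)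
    -- γₙ is the largest eigenvalue of L
    (hγn : ∀ z : Fin n → ℝ, z ⬝ᵥ L.mulVec z ≤ γn * (z ⬝ᵥ z))
    (w : Fin n → ℝ) (hw : w = fun i => k i - vol / n) :
    (Lp * Matrix.diagonal k).trace - (∑ i, (w i)^2) / (γ2 * vol)
        ≤ (Lp * Matrix.diagonal k).trace - (1/vol) * (k ⬝ᵥ Lp.mulVec k) ∧
      (Lp * Matrix.diagonal k).trace - (1/vol) * (k ⬝ᵥ Lp.mulVec k)
        ≤ (Lp * Matrix.diagonal k).trace - (∑ i, (w i)^2) / (γn * vol) :=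
  kemeny_degree_bounds_general hn c hsym k hk vol hvol hvolpos L Lp hL hg1 hg2 hg3 hker γ2 γn hγ2pos
    hγnpos hγ2 hγn w hw
end

section
/- Let G be a connected graph on n vertices with normalized adjacency matrix eigenvalues 1 = λ_1 > λ_2 ≥ ... ≥ λ_n ≥ -1, and let B be an m×m principal submatrix of the normalized adjacency matrix with eigenvalues θ_1 ≥ ... ≥ θ_m. Then Σ_{i=2}^m 1/(1-θ_i) + (n-m)/2 ≤ K(G) ≤ Σ_{i=2}^m 1/(1-θ_i) + (n-m)/(1-λ_2). -/
/-!
Both kinds of `B` are compressions `Sᵀ N S` with `Sᵀ S = 1`; diagonalizing `N` and `B` turns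
this into `Pᵀ diag(λ) P = diag(θ)` with `P` again having orthonormal columns. Cauchy
interlacing `λ_{n-m+k} ≤ θ_k ≤ λ_k` then follows by counting dimensions: some `c ≠ 0`
supported on the first `k + 1` coordinates has `P c` vanishing on the first `k`, and the
Rayleigh quotients of `c` for `diag(θ)` and of `P c` for `diag(λ)` coincide. Finally pair
`θ_k` with `λ_k` (resp. `λ_{n-m+k}`) in Kemeny's sum and bound the `n - m` unpaired terms
`1 / (1 - λ_i)` below by `1/2` (as `λ_i ≥ -1`) and above by `1 / (1 - λ_2)`.
-/

open Matrix Finset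

section SumBounds

variable {ι κ R : Type*} [DecidableEq ι] [Ring R] [PartialOrder R] [IsOrderedRing R]

theorem Finset.sum_le_sum_comp_add_card_sub_mul {s : Finset ι} {t : Finset κ} {e : κ → ι}
    (he : Function.Injective e) (hts : ∀ k ∈ t, e k ∈ s) {g : ι → R} {h : κ → R} {C : R}
    (hgh : ∀ k ∈ t, g (e k) ≤ h k) (hgC : ∀ i ∈ s, g i ≤ C) :
    ∑ i ∈ s, g i ≤ ∑ k ∈ t, h k + ((#s : R) - #t) * C := by
  have hsub : t.image e ⊆ s := image_subset_iff.mpr hts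
  have hcard : #(s \ t.image e) = #s - #t := by
    rw [card_sdiff_of_subset hsub, card_image_of_injective t he]
  have hcard_le : #t ≤ #s := (card_image_of_injective t he).symm.le.trans (card_le_card hsub)
  rw [← sum_sdiff hsub, sum_image he.injOn, add_comm]
  gcongr ?_ + ?_
  · exact sum_le_sum hgh
  · calc ∑ i ∈ s \ t.image e, g i ≤ #(s \ t.image e) • C :=
          sum_le_card_nsmul _ _ _ fun i hi => hgC i (mem_sdiff.mp hi).1
      _ = ((#s : R) - #t) * C := by rw [nsmul_eq_mul, hcard, Nat.cast_sub hcard_le]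

theorem Finset.sum_comp_add_card_sub_mul_le {s : Finset ι} {t : Finset κ} {e : κ → ι}
    (he : Function.Injective e) (hts : ∀ k ∈ t, e k ∈ s) {g : ι → R} {h : κ → R} {C : R}
    (hgh : ∀ k ∈ t, h k ≤ g (e k)) (hgC : ∀ i ∈ s, C ≤ g i) :
    ∑ k ∈ t, h k + ((#s : R) - #t) * C ≤ ∑ i ∈ s, g i := by
  have := sum_le_sum_comp_add_card_sub_mul he hts (g := -g) (h := -h) (C := -C)
    (fun k hk => neg_le_neg (hgh k hk)) fun i hi => neg_le_neg (hgC i hi)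
  simp only [Pi.neg_apply] at this
  rwa [sum_neg_distrib, sum_neg_distrib, mul_neg, ← neg_add, neg_le_neg_iff] at this

end SumBounds

section Rayleigh

variable {ι : Type*} [Fintype ι]

theorem sum_mul_sq_le_mul_sum_sq (a x : ι → ℝ) {t : ℝ} (h : ∀ i, x i ≠ 0 → a i ≤ t) :
    ∑ i, a i * x i ^ 2 ≤ t * ∑ i, x i ^ 2 := by
  rw [mul_sum]
  refine sum_le_sum fun i _ => ?_
  by_cases hx : x i = 0
  · simp [hx]
  · exact mul_le_mul_of_nonneg_right (h i hx) (sq_nonneg _)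

theorem mul_sum_sq_le_sum_mul_sq (a x : ι → ℝ) {t : ℝ} (h : ∀ i, x i ≠ 0 → t ≤ a i) :
    t * ∑ i, x i ^ 2 ≤ ∑ i, a i * x i ^ 2 := by
  have := sum_mul_sq_le_mul_sum_sq (-a) x (t := -t) fun i hi => neg_le_neg (h i hi)
  simpa [neg_mul, sum_neg_distrib] using this

end Rayleigh

theorem Matrix.exists_ne_zero_supported_mulVec_eq_zero {ι κ K : Type*} [Fintype ι] [Fintype κ]
    [DecidableEq ι] [Field K] (P : Matrix κ ι K) (I : Finset ι) (J : Finset κ)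
    (hJI : #J < #I) :
    ∃ c : ι → K, c ≠ 0 ∧ (∀ j ∉ I, c j = 0) ∧ ∀ i ∈ J, (P *ᵥ c) i = 0 := by
  let f : (ι → K) →ₗ[K] ((Iᶜ : Finset ι) → K) × (J → K) :=
    (LinearMap.funLeft K K Subtype.val).prod (LinearMap.funLeft K K Subtype.val ∘ₗ P.mulVecLin)
  have hdim :
      Module.finrank K (((Iᶜ : Finset ι) → K) × (J → K)) < Module.finrank K (ι → K) := by
    simp only [Module.finrank_prod, Module.finrank_fintype_fun_eq_card, Fintype.card_coe,
      card_compl]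
    have := I.card_le_univ
    omega
  obtain ⟨c, hc, hc0⟩ := (Submodule.ne_bot_iff _).mp (LinearMap.ker_ne_bot_of_finrank_lt hdim)
  have hc : f c = 0 := hc
  refine ⟨c, hc0, fun j hj => ?_, fun i hi => ?_⟩
  · exact congrFun (congrArg Prod.fst hc) ⟨j, mem_compl.mpr hj⟩
  · exact congrFun (congrArg Prod.snd hc) ⟨i, hi⟩

theorem Matrix.exists_transpose_mul_self_eq_one_and_submatrix_eq {ι κ : Type*} [Fintype κ]
    [DecidableEq ι] [DecidableEq κ] (N : Matrix κ κ ℝ) {f : ι → κ}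
    (hf : Function.Injective f) :
    ∃ S : Matrix κ ι ℝ, Sᵀ * S = 1 ∧ N.submatrix f f = Sᵀ * N * S := by
  refine ⟨(1 : Matrix κ κ ℝ).submatrix id f, ?_, ?_⟩
  · ext i j
    simp [mul_apply, one_apply, hf.eq_iff]
  · ext i j
    simp [mul_apply, one_apply]

namespace Matrix

variable {ι κ : Type*} [Fintype ι] [Fintype κ] [DecidableEq κ]

theorem sum_mul_sq_mulVec (P : Matrix κ ι ℝ) (a : κ → ℝ) (c : ι → ℝ) :
    ∑ i, a i * (P *ᵥ c) i ^ 2 = c ⬝ᵥ ((Pᵀ * diagonal a * P) *ᵥ c) := by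
  rw [← mulVec_mulVec, ← mulVec_mulVec, dotProduct_mulVec, vecMul_transpose, dotProduct]
  simp only [mulVec_diagonal]
  exact sum_congr rfl fun i _ => by ring

variable [DecidableEq ι]

theorem sum_mul_sq_mulVec_eq_of_transpose_mul_diagonal_mul {P : Matrix κ ι ℝ} {a : κ → ℝ}
    {b : ι → ℝ} (h : Pᵀ * diagonal a * P = diagonal b) (c : ι → ℝ) :
    ∑ i, a i * (P *ᵥ c) i ^ 2 = ∑ j, b j * c j ^ 2 := by
  have hb : (1 : Matrix ι ι ℝ)ᵀ * diagonal b * 1 = diagonal b := by simp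
  rw [sum_mul_sq_mulVec, h, ← hb, ← sum_mul_sq_mulVec, one_mulVec]

def IsDiagonalCompression (P : Matrix κ ι ℝ) (a : κ → ℝ) (b : ι → ℝ) : Prop :=
  Pᵀ * P = 1 ∧ Pᵀ * diagonal a * P = diagonal b

namespace IsDiagonalCompression

variable {P : Matrix κ ι ℝ} {a : κ → ℝ} {b : ι → ℝ}

theorem sum_sq_mulVec (hP : P.IsDiagonalCompression a b) (c : ι → ℝ) :
    ∑ i, (P *ᵥ c) i ^ 2 = ∑ j, c j ^ 2 := by
  have h1 : Pᵀ * diagonal (fun _ : κ => (1 : ℝ)) * P = diagonal fun _ : ι => 1 := by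
    rw [diagonal_one, diagonal_one, Matrix.mul_one, hP.1]
  simpa using sum_mul_sq_mulVec_eq_of_transpose_mul_diagonal_mul h1 c

theorem le_of_support (hP : P.IsDiagonalCompression a b) {c : ι → ℝ} (hc : c ≠ 0)
    {s t : ℝ} (hb : ∀ j, c j ≠ 0 → s ≤ b j)
    (ha : ∀ i, (P *ᵥ c) i ≠ 0 → a i ≤ t) :
    s ≤ t := by
  have hpos : 0 < ∑ j, c j ^ 2 := by
    obtain ⟨j, hj⟩ := Function.ne_iff.mp hc
    exact sum_pos' (fun j _ => sq_nonneg _) ⟨j, mem_univ j, sq_pos_of_ne_zero hj⟩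
  refine le_of_mul_le_mul_right ?_ hpos
  calc s * ∑ j, c j ^ 2 ≤ ∑ j, b j * c j ^ 2 := mul_sum_sq_le_sum_mul_sq b c hb
    _ = ∑ i, a i * (P *ᵥ c) i ^ 2 :=
      (sum_mul_sq_mulVec_eq_of_transpose_mul_diagonal_mul hP.2 c).symm
    _ ≤ t * ∑ i, (P *ᵥ c) i ^ 2 := sum_mul_sq_le_mul_sum_sq a _ ha
    _ = t * ∑ j, c j ^ 2 := by rw [hP.sum_sq_mulVec]

theorem le_of_support' (hP : P.IsDiagonalCompression a b) {c : ι → ℝ} (hc : c ≠ 0)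
    {s t : ℝ} (hb : ∀ j, c j ≠ 0 → b j ≤ s)
    (ha : ∀ i, (P *ᵥ c) i ≠ 0 → t ≤ a i) :
    t ≤ s := by
  have hneg : P.IsDiagonalCompression (-a) (-b) := ⟨hP.1, by
    rw [Pi.neg_def, Pi.neg_def, ← diagonal_neg, ← diagonal_neg, Matrix.mul_neg, Matrix.neg_mul,
      hP.2]⟩
  exact neg_le_neg_iff.mp <| hneg.le_of_support hc (fun j hj => neg_le_neg (hb j hj))
    fun i hi => neg_le_neg (ha i hi)

end IsDiagonalCompression

theorem IsHermitian.exists_orthogonal_diagonalization {A : Matrix ι ι ℝ} (hA : A.IsHermitian) :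
    ∃ U : Matrix ι ι ℝ,
      U * Uᵀ = 1 ∧ Uᵀ * U = 1 ∧ A = U * diagonal hA.eigenvalues * Uᵀ := by
  have hstar :
      star (hA.eigenvectorUnitary : Matrix ι ι ℝ) = (hA.eigenvectorUnitary : _)ᵀ := by
    rw [star_eq_conjTranspose, conjTranspose_eq_transpose_of_trivial]
  refine ⟨hA.eigenvectorUnitary, ?_, ?_, ?_⟩
  · rw [← hstar]; exact Unitary.mul_star_self_of_mem hA.eigenvectorUnitary.2
  · rw [← hstar]; exact Unitary.star_mul_self_of_mem hA.eigenvectorUnitary.2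
  · conv_lhs => rw [hA.spectral_theorem]
    simp [hstar, RCLike.ofReal_real_eq_id]

theorem IsHermitian.exists_isDiagonalCompression {N : Matrix κ κ ℝ} {B : Matrix ι ι ℝ}
    (hN : N.IsHermitian) (hB : B.IsHermitian) {S : Matrix κ ι ℝ} (hS : Sᵀ * S = 1)
    (hBS : B = Sᵀ * N * S) :
    ∃ P : Matrix κ ι ℝ, P.IsDiagonalCompression hN.eigenvalues hB.eigenvalues := by
  obtain ⟨U, hUU', -, hNU⟩ := hN.exists_orthogonal_diagonalization
  obtain ⟨V, -, hV'V, hBV⟩ := hB.exists_orthogonal_diagonalization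
  refine ⟨Uᵀ * S * V, ?_, ?_⟩
  · calc (Uᵀ * S * V)ᵀ * (Uᵀ * S * V) = Vᵀ * (Sᵀ * (U * Uᵀ) * S) * V := by
          simp only [transpose_mul, transpose_transpose, Matrix.mul_assoc]
      _ = 1 := by rw [hUU', Matrix.mul_one, hS, Matrix.mul_one, hV'V]
  · calc (Uᵀ * S * V)ᵀ * diagonal hN.eigenvalues * (Uᵀ * S * V)
          = Vᵀ * (Sᵀ * (U * diagonal hN.eigenvalues * Uᵀ) * S) * V := by
          simp only [transpose_mul, transpose_transpose, Matrix.mul_assoc]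
      _ = (Vᵀ * V) * diagonal hB.eigenvalues * (Vᵀ * V) := by
          rw [← hNU, ← hBS]
          nth_rw 1 [hBV]
          simp only [Matrix.mul_assoc]
      _ = diagonal hB.eigenvalues := by rw [hV'V, Matrix.one_mul, Matrix.mul_one]

end Matrix

namespace Matrix.IsDiagonalCompression

variable {n m : ℕ} {P : Matrix (Fin n) (Fin m) ℝ} {a : Fin n → ℝ} {b : Fin m → ℝ}

theorem le_of_val_le (hP : P.IsDiagonalCompression a b) (ha : Antitone a) (hb : Antitone b)
    {i : Fin n} {k : Fin m} (hik : (i : ℕ) ≤ k) : b k ≤ a i := by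
  obtain ⟨c, hc, hcI, hcJ⟩ := P.exists_ne_zero_supported_mulVec_eq_zero (Iic k) (Iio i) (by
    rw [Fin.card_Iic, Fin.card_Iio]
    omega)
  refine hP.le_of_support hc (fun j hj => hb ?_) fun i' hi' => ha ?_
  · by_contra hjk
    exact hj (hcI j (by simpa using hjk))
  · by_contra hii'
    exact hi' (hcJ i' (by simpa using hii'))

theorem le_of_le_val (hP : P.IsDiagonalCompression a b) (ha : Antitone a) (hb : Antitone b)
    {i : Fin n} {k : Fin m} (hik : n - m + k ≤ i) : a i ≤ b k := by
  obtain ⟨c, hc, hcI, hcJ⟩ := P.exists_ne_zero_supported_mulVec_eq_zero (Ici k) (Ioi i) (by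
    rw [Fin.card_Ici, Fin.card_Ioi]
    omega)
  refine hP.le_of_support' hc (fun j hj => hb ?_) fun i' hi' => ha ?_
  · by_contra hjk
    exact hj (hcI j (by simpa using hjk))
  · by_contra hii'
    exact hi' (hcJ i' (by simpa using hii'))

end Matrix.IsDiagonalCompression

/-- Kemeny's constant `∑_{i ≥ 2} 1 / (1 - μ_i)`: the spectrum `μ` is listed in decreasing
order, so index `0` is the Perron eigenvalue `1`, which is left out. -/
noncomputable def kemenySum {p : ℕ} [NeZero p] (μ : Fin p → ℝ) : ℝ :=
  ∑ i ∈ univ.erase 0, (1 - μ i)⁻¹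

section KemenySum

variable {n m : ℕ} [NeZero n] [NeZero m] {lam : Fin n → ℝ} {θ : Fin m → ℝ}

theorem cast_card_univ_erase_zero_sub :
    ((#(univ.erase (0 : Fin n)) : ℝ) - #(univ.erase (0 : Fin m))) = n - m := by
  rw [card_erase_of_mem (mem_univ _), card_erase_of_mem (mem_univ _), card_univ, card_univ,
    Fintype.card_fin, Fintype.card_fin, Nat.cast_sub NeZero.one_le, Nat.cast_sub NeZero.one_le]
  ring

theorem Fin.castLE_mem_univ_erase_zero (hmn : m ≤ n) {k : Fin m} (hk : k ∈ univ.erase 0) :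
    Fin.castLE hmn k ∈ univ.erase 0 := by
  have := Fin.val_ne_zero_iff.mpr (ne_of_mem_erase hk)
  exact mem_erase.mpr ⟨Fin.val_ne_zero_iff.mp this, mem_univ _⟩

theorem kemenySum_add_le_of_le_castLE (hmn : m ≤ n) (hlamlt : ∀ i, i ≠ 0 → lam i < 1)
    (hlamge : ∀ i, -1 ≤ lam i) (hupper : ∀ k, θ k ≤ lam (Fin.castLE hmn k)) :
    kemenySum θ + ((n : ℝ) - m) / 2 ≤ kemenySum lam := by
  have hpos (i : Fin n) (hi : i ∈ univ.erase 0) : 0 < 1 - lam i :=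
    sub_pos.mpr (hlamlt i (ne_of_mem_erase hi))
  have := sum_comp_add_card_sub_mul_le (s := univ.erase 0) (t := univ.erase 0)
    (g := fun i => (1 - lam i)⁻¹) (h := fun k => (1 - θ k)⁻¹) (C := 2⁻¹)
    (Fin.castLE_injective hmn) (fun k => Fin.castLE_mem_univ_erase_zero hmn)
    (fun k hk => inv_anti₀ (hpos _ (Fin.castLE_mem_univ_erase_zero hmn hk)) (by
      linarith [hupper k]))
    fun i hi => inv_anti₀ (hpos i hi) (by linarith [hlamge i])
  rwa [cast_card_univ_erase_zero_sub, ← div_eq_mul_inv] at this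

theorem kemenySum_le_add_of_le (hn : 1 < n) (hmn : m ≤ n) (hsort : Antitone lam)
    (hlamlt : ∀ i, i ≠ 0 → lam i < 1) (hupper : ∀ k, θ k ≤ lam (Fin.castLE hmn k))
    (hlower : ∀ k : Fin m, lam ⟨n - m + k, by omega⟩ ≤ θ k) :
    kemenySum lam ≤ kemenySum θ + ((n : ℝ) - m) / (1 - lam ⟨1, hn⟩) := by
  have hpos (i : Fin n) (hi : i ∈ univ.erase 0) : 0 < 1 - lam i :=
    sub_pos.mpr (hlamlt i (ne_of_mem_erase hi))
  have hshift_mem (k : Fin m) (hk : k ∈ univ.erase 0) :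
      (⟨n - m + k, by omega⟩ : Fin n) ∈ univ.erase 0 := by
    have := Fin.val_ne_zero_iff.mpr (ne_of_mem_erase hk)
    exact mem_erase.mpr ⟨Fin.val_ne_zero_iff.mp (by dsimp; omega), mem_univ _⟩
  have hle_one (i : Fin n) (hi : i ∈ univ.erase 0) : lam i ≤ lam ⟨1, hn⟩ :=
    hsort (Fin.le_def.mpr (Nat.one_le_iff_ne_zero.mpr
      (Fin.val_ne_zero_iff.mpr (ne_of_mem_erase hi))))
  have hone : (⟨1, hn⟩ : Fin n) ∈ univ.erase 0 :=
    mem_erase.mpr ⟨Fin.val_ne_zero_iff.mp one_ne_zero, mem_univ _⟩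
  have := sum_le_sum_comp_add_card_sub_mul (s := univ.erase 0) (t := univ.erase 0)
    (g := fun i => (1 - lam i)⁻¹) (h := fun k => (1 - θ k)⁻¹)
    (C := (1 - lam ⟨1, hn⟩)⁻¹) (fun k l hkl => Fin.ext (by simpa using hkl)) hshift_mem
    (fun k hk => inv_anti₀
      (by linarith [hupper k, hpos _ (Fin.castLE_mem_univ_erase_zero hmn hk)])
      (by linarith [hlower k]))
    fun i hi => inv_anti₀ (hpos _ hone) (by linarith [hle_one i hi])
  rwa [cast_card_univ_erase_zero_sub, ← div_eq_mul_inv] at this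

end KemenySum

theorem kemeny_interlacing_bounds_general {n m : ℕ} [NeZero n] [NeZero m]
    (hn : 1 < n) (hmn : m ≤ n)
    (N : Matrix (Fin n) (Fin n) ℝ) (hN : N.IsHermitian)
    (lam : Fin n → ℝ) (hlam : lam = hN.eigenvalues)
    (hsort : ∀ i j : Fin n, i ≤ j → lam j ≤ lam i)
    (hlamlt : ∀ i : Fin n, i ≠ 0 → lam i < 1)
    (hlamge : ∀ i : Fin n, -1 ≤ lam i)
    (B : Matrix (Fin m) (Fin m) ℝ) (hBH : B.IsHermitian)
    (hB : (∃ f : Fin m → Fin n, Function.Injective f ∧ B = N.submatrix f f) ∨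
      (∃ S : Matrix (Fin n) (Fin m) ℝ, Sᵀ * S = 1 ∧ B = Sᵀ * N * S))
    (θ : Fin m → ℝ) (hθ : θ = hBH.eigenvalues)
    (hθsort : ∀ i j : Fin m, i ≤ j → θ j ≤ θ i) :
    (∑ i ∈ Finset.univ.erase (0 : Fin m), (1 - θ i)⁻¹) + ((n : ℝ) - m)/2
        ≤ ∑ i ∈ Finset.univ.erase (0 : Fin n), (1 - lam i)⁻¹ ∧
      ∑ i ∈ Finset.univ.erase (0 : Fin n), (1 - lam i)⁻¹
        ≤ (∑ i ∈ Finset.univ.erase (0 : Fin m), (1 - θ i)⁻¹)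
            + ((n : ℝ) - m)/(1 - lam ⟨1, hn⟩) := by
  obtain ⟨S, hS, hBS⟩ :
      ∃ S : Matrix (Fin n) (Fin m) ℝ, Sᵀ * S = 1 ∧ B = Sᵀ * N * S := by
    rcases hB with ⟨f, hf, rfl⟩ | hS
    · exact N.exists_transpose_mul_self_eq_one_and_submatrix_eq hf
    · exact hS
  obtain ⟨P, hP⟩ := hN.exists_isDiagonalCompression hBH hS hBS
  rw [← hlam, ← hθ] at hP
  have hlam_anti : Antitone lam := fun i j => hsort i j
  have hθ_anti : Antitone θ := fun i j => hθsort i j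
  have hupper (k : Fin m) : θ k ≤ lam (Fin.castLE hmn k) :=
    hP.le_of_val_le hlam_anti hθ_anti le_rfl
  have hlower (k : Fin m) : lam ⟨n - m + k, by omega⟩ ≤ θ k :=
    hP.le_of_le_val hlam_anti hθ_anti le_rfl
  exact ⟨kemenySum_add_le_of_le_castLE hmn hlamlt hlamge hupper,
    kemenySum_le_add_of_le hn hmn hlam_anti hlamlt hupper hlower⟩

/-- Theorem 5.5: let `G` be a connected graph with normalized adjacency eigenvalues
`1 = λ₁ > λ₂ ≥ ... ≥ λₙ ≥ -1` and let `B` be an `m×m` matrix which is either a principal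
submatrix of the normalized adjacency matrix or the quotient matrix of a vertex partition
(equivalently, `B = Sᵀ N S` for some `S` with orthonormal columns), with eigenvalues
`θ₁ ≥ ... ≥ θₘ`. Then
`∑_{i=2}^m 1/(1-θᵢ) + (n-m)/2 ≤ K(G) ≤ ∑_{i=2}^m 1/(1-θᵢ) + (n-m)/(1-λ₂)`. -/
theorem kemeny_interlacing_bounds {n m : ℕ} [NeZero n] [NeZero m]
    (hn : 1 < n) (hmn : m ≤ n)
    (N : Matrix (Fin n) (Fin n) ℝ) (hN : N.IsHermitian)
    (lam : Fin n → ℝ) (hlam : lam = hN.eigenvalues)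
    (hsort : ∀ i j : Fin n, i ≤ j → lam j ≤ lam i)
    (hlam0 : lam 0 = 1) (hlamlt : ∀ i : Fin n, i ≠ 0 → lam i < 1)
    (hlamge : ∀ i : Fin n, -1 ≤ lam i)
    (B : Matrix (Fin m) (Fin m) ℝ) (hBH : B.IsHermitian)
    (hB : (∃ f : Fin m → Fin n, Function.Injective f ∧ B = N.submatrix f f) ∨
      (∃ S : Matrix (Fin n) (Fin m) ℝ, Sᵀ * S = 1 ∧ B = Sᵀ * N * S))
    (θ : Fin m → ℝ) (hθ : θ = hBH.eigenvalues)
    (hθsort : ∀ i j : Fin m, i ≤ j → θ j ≤ θ i) :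
    (∑ i ∈ Finset.univ.erase (0 : Fin m), (1 - θ i)⁻¹) + ((n : ℝ) - m)/2
        ≤ ∑ i ∈ Finset.univ.erase (0 : Fin n), (1 - lam i)⁻¹ ∧
      ∑ i ∈ Finset.univ.erase (0 : Fin n), (1 - lam i)⁻¹
        ≤ (∑ i ∈ Finset.univ.erase (0 : Fin m), (1 - θ i)⁻¹)
            + ((n : ℝ) - m)/(1 - lam ⟨1, hn⟩) :=
  kemeny_interlacing_bounds_general hn hmn N hN lam hlam hsort hlamlt hlamge B hBH hB θ hθ hθsort
end

section
/- Let G be a connected graph on n ≥ 2 vertices with degrees k_1,...,k_n and normalized adjacency eigenvalues 1 = λ_1 > λ_2 ≥ ... ≥ λ_n ≥ -1. Then K(G) ≤ min over edges {i,j} of √(k_i k_j)/(√(k_i k_j)+1) + (n-2)/(1-λ_2). -/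
open Matrix Finset

/-!
The smallest eigenvalue `λₙ` of the normalized adjacency matrix `N` is at most the Rayleigh
quotient of `eᵢ - eⱼ`, which for an edge `{i,j}` equals `-N i j = -1/√(kᵢkⱼ)`. Hence the term
`1/(1-λₙ)` of Kemeny's constant is at most `√(kᵢkⱼ)/(√(kᵢkⱼ)+1)`, and each of the other `n-2`
terms is at most `1/(1-λ₂)` because the eigenvalues are sorted.
-/

namespace Matrix

open scoped MatrixOrder ComplexOrder

variable {n : Type*} [Fintype n] [DecidableEq n]

theorem IsHermitian.posSemidef_sub_algebraMap {𝕜 : Type*} [RCLike 𝕜] {A : Matrix n n 𝕜}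
    (hA : A.IsHermitian) {c : ℝ} (hc : ∀ i, c ≤ hA.eigenvalues i) :
    (A - algebraMap ℝ (Matrix n n 𝕜) c).PosSemidef := by
  rw [← le_iff, algebraMap_le_iff_le_spectrum hA.isSelfAdjoint,
    hA.spectrum_real_eq_range_eigenvalues]
  rintro _ ⟨i, rfl⟩
  exact hc i

theorem dotProduct_mulVec_single_sub_single {R : Type*} [CommRing R] (A : Matrix n n R)
    (i j : n) :
    (Pi.single i 1 - Pi.single j 1) ⬝ᵥ A *ᵥ (Pi.single i 1 - Pi.single j 1 : n → R)
      = A i i + A j j - A i j - A j i := by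
  simp only [mulVec_sub, dotProduct_sub, sub_dotProduct, mulVec_single_one,
    single_one_dotProduct, col_apply]
  ring

theorem IsHermitian.two_mul_le_of_le_eigenvalues {A : Matrix n n ℝ} (hA : A.IsHermitian)
    {c : ℝ} (hc : ∀ l, c ≤ hA.eigenvalues l) {i j : n} (hij : i ≠ j) :
    2 * c ≤ A i i + A j j - A i j - A j i := by
  have hquad := (hA.posSemidef_sub_algebraMap hc).dotProduct_mulVec_nonneg
    (Pi.single i 1 - Pi.single j 1)
  rw [star_trivial, dotProduct_mulVec_single_sub_single] at hquad
  simp only [sub_apply, algebraMap_eq_diagonal, diagonal_apply_eq, diagonal_apply_ne _ hij,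
    diagonal_apply_ne _ hij.symm, Pi.algebraMap_apply, Algebra.algebraMap_self,
    RingHom.id_apply] at hquad
  linarith

end Matrix

theorem sum_erase_zero_inv_one_sub_le {n : ℕ} [NeZero n] (hn : 1 < n) {lam : Fin n → ℝ}
    (hlam : Antitone lam) (hlam1 : lam ⟨1, hn⟩ < 1) {m : Fin n} (hm : m ≠ 0) :
    ∑ l ∈ univ.erase 0, (1 - lam l)⁻¹
      ≤ (1 - lam m)⁻¹ + ((n : ℝ) - 2) / (1 - lam ⟨1, hn⟩) := by
  have hm_mem : m ∈ univ.erase 0 := mem_erase.2 ⟨hm, mem_univ m⟩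
  rw [← add_sum_erase _ _ hm_mem, div_eq_mul_inv]
  gcongr
  have hterm : ∀ l ∈ (univ.erase 0).erase m, (1 - lam l)⁻¹ ≤ (1 - lam ⟨1, hn⟩)⁻¹ := by
    intro l hl
    have hl0 : l ≠ 0 := (mem_erase.1 (mem_of_mem_erase hl)).1
    have hle : lam l ≤ lam ⟨1, hn⟩ :=
      hlam (Fin.le_def.2 (Nat.one_le_iff_ne_zero.2 (Fin.val_ne_zero_iff.2 hl0)))
    exact inv_anti₀ (by linarith) (by linarith)
  calc ∑ l ∈ (univ.erase 0).erase m, (1 - lam l)⁻¹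
      ≤ #((univ.erase 0).erase m) • (1 - lam ⟨1, hn⟩)⁻¹ := sum_le_card_nsmul _ _ _ hterm
    _ = ((n : ℝ) - 2) * (1 - lam ⟨1, hn⟩)⁻¹ := by
      rw [card_erase_of_mem hm_mem, card_erase_of_mem (mem_univ _), card_univ, Fintype.card_fin,
        nsmul_eq_mul, Nat.sub_sub, Nat.cast_sub hn]
      norm_num

theorem inv_one_sub_le_div_add_one {c s : ℝ} (hs : 0 < s) (hc : c ≤ -s⁻¹) :
    (1 - c)⁻¹ ≤ s / (s + 1) :=
  calc (1 - c)⁻¹ ≤ (1 + s⁻¹)⁻¹ := inv_anti₀ (by positivity) (by linarith)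
    _ = s / (s + 1) := by field_simp

theorem kemeny_edge_upper_bound_general {n : ℕ} [NeZero n] (hn : 1 < n)
    (A : Matrix (Fin n) (Fin n) ℝ)
    (hdiag : ∀ i, A i i = 0)
    (k : Fin n → ℝ) (hkpos : ∀ i, 0 < k i)
    (N : Matrix (Fin n) (Fin n) ℝ)
    (hNdef : N = Matrix.of fun i j => A i j / (Real.sqrt (k i) * Real.sqrt (k j)))
    (hN : N.IsHermitian)
    (lam : Fin n → ℝ) (hlam : lam = hN.eigenvalues)
    (hsort : ∀ i j : Fin n, i ≤ j → lam j ≤ lam i)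
    (hlamlt : ∀ i : Fin n, i ≠ 0 → lam i < 1) :
    ∀ i j : Fin n, A i j = 1 →
      ∑ l ∈ Finset.univ.erase (0 : Fin n), (1 - lam l)⁻¹
        ≤ Real.sqrt (k i * k j) / (Real.sqrt (k i * k j) + 1)
            + ((n : ℝ) - 2)/(1 - lam ⟨1, hn⟩) := by
  intro i j hij
  have hne : i ≠ j := by
    rintro rfl
    simp [hdiag] at hij
  have hs : 0 < Real.sqrt (k i * k j) := Real.sqrt_pos.2 (mul_pos (hkpos i) (hkpos j))
  have hN_apply : ∀ a b, N a b = A a b / (Real.sqrt (k a) * Real.sqrt (k b)) := fun a b => by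
    rw [hNdef, of_apply]
  have hN_ij : N i j = (Real.sqrt (k i * k j))⁻¹ := by
    rw [hN_apply, hij, Real.sqrt_mul (hkpos i).le, one_div]
  have hN_diag : ∀ a, N a a = 0 := fun a => by rw [hN_apply, hdiag, zero_div]
  let last : Fin n := ⟨n - 1, by omega⟩
  have hlast : last ≠ 0 := Fin.val_ne_zero_iff.1 (show n - 1 ≠ 0 by omega)
  have hmin : lam last ≤ -(Real.sqrt (k i * k j))⁻¹ := by
    have hbound := hN.two_mul_le_of_le_eigenvalues (c := lam last)
      (fun l => hlam ▸ hsort l last (Fin.le_def.2 (Nat.le_sub_one_of_lt l.isLt))) hne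
    rw [hN_diag, hN_diag, ← hN.apply j i, star_trivial, hN_ij] at hbound
    linarith
  have hrest := sum_erase_zero_inv_one_sub_le hn hsort
    (hlamlt _ (Fin.val_ne_zero_iff.1 one_ne_zero)) hlast
  linarith [inv_one_sub_le_div_add_one hs hmin]

/-- Corollary 5.6: for a connected graph `G` on `n ≥ 2` vertices with degrees `kᵢ` and
normalized adjacency eigenvalues `1 = λ₁ > λ₂ ≥ ... ≥ λₙ ≥ -1`,
`K(G) ≤ min_{i∼j} √(kᵢkⱼ)/(√(kᵢkⱼ)+1) + (n-2)/(1-λ₂)`; that is, the bound holds for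
every edge `{i,j}`. Here `K(G) = ∑_{i=2}^n 1/(1-λᵢ)`. -/
theorem kemeny_edge_upper_bound {n : ℕ} [NeZero n] (hn : 1 < n)
    (A : Matrix (Fin n) (Fin n) ℝ) (hsym : A.IsSymm)
    (h01 : ∀ i j, A i j = 0 ∨ A i j = 1) (hdiag : ∀ i, A i i = 0)
    (k : Fin n → ℝ) (hk : ∀ i, k i = ∑ j, A i j) (hkpos : ∀ i, 0 < k i)
    (N : Matrix (Fin n) (Fin n) ℝ)
    (hNdef : N = Matrix.of fun i j => A i j / (Real.sqrt (k i) * Real.sqrt (k j)))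
    (hN : N.IsHermitian)
    (lam : Fin n → ℝ) (hlam : lam = hN.eigenvalues)
    (hsort : ∀ i j : Fin n, i ≤ j → lam j ≤ lam i)
    (hlam0 : lam 0 = 1) (hlamlt : ∀ i : Fin n, i ≠ 0 → lam i < 1)
    (hlamge : ∀ i : Fin n, -1 ≤ lam i) :
    ∀ i j : Fin n, A i j = 1 →
      ∑ l ∈ Finset.univ.erase (0 : Fin n), (1 - lam l)⁻¹
        ≤ Real.sqrt (k i * k j) / (Real.sqrt (k i * k j) + 1)
            + ((n : ℝ) - 2)/(1 - lam ⟨1, hn⟩) :=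
  kemeny_edge_upper_bound_general hn A hdiag k hkpos N hNdef hN lam hlam hsort hlamlt
end

section
/- Let G be a connected graph on n vertices and let H be a connected spanning subgraph of G obtained by deleting r ≤ n-1 edges. If μ_1 ≥ ... ≥ μ_n = 0 and θ_1 ≥ ... ≥ θ_n = 0 are the normalized Laplacian eigenvalues of G and H respectively, then (r/μ_1) + Σ_{j=1}^{n-r-1} 1/θ_j ≤ K(G) ≤ Σ_{j=r+1}^{n-1} 1/θ_j + r/μ_{n-1}. -/
open Finset

/-- Theorem 5.9: let `G` be a connected graph on `n` vertices and `H` a connected spanning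
subgraph obtained by deleting `r ≤ n-1` edges. With normalized Laplacian eigenvalues
`μ₁ ≥ ... ≥ μₙ = 0` of `G` and `θ₁ ≥ ... ≥ θₙ = 0` of `H` (extended by the convention
`μ₀ = 2` and `μᵢ = 0` for `i ≥ n+1`, matching truncated subtraction on `ℕ`), and the
edge-interlacing inequalities `μ_{i-r} ≥ θᵢ ≥ μ_{i+r}`, one has
`r/μ₁ + ∑_{j=1}^{n-r-1} 1/θⱼ ≤ K(G) ≤ ∑_{j=r+1}^{n-1} 1/θⱼ + r/μ_{n-1}`,
where `K(G) = ∑_{i=1}^{n-1} 1/μᵢ`. -/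
theorem kemeny_edge_deletion_bounds (n r : ℕ) (hn : 2 ≤ n) (hr : 1 ≤ r) (hrn : r ≤ n - 1)
    (μ θ : ℕ → ℝ)
    (hμconv0 : μ 0 = 2) (hθconv0 : θ 0 = 2)
    (hμconvhigh : ∀ i, n + 1 ≤ i → μ i = 0) (hθconvhigh : ∀ i, n + 1 ≤ i → θ i = 0)
    (hμn : μ n = 0) (hθn : θ n = 0)
    (hμsort : ∀ i j, 1 ≤ i → i ≤ j → j ≤ n → μ j ≤ μ i)
    (hθsort : ∀ i j, 1 ≤ i → i ≤ j → j ≤ n → θ j ≤ θ i)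
    (hμpos : ∀ i, 1 ≤ i → i ≤ n - 1 → 0 < μ i)
    (hθpos : ∀ i, 1 ≤ i → i ≤ n - 1 → 0 < θ i)
    (hμle2 : ∀ i, μ i ≤ 2) (hθle2 : ∀ i, θ i ≤ 2)
    (hinter : ∀ i, 1 ≤ i → i ≤ n → θ i ≤ μ (i - r) ∧ μ (i + r) ≤ θ i) :
    (r : ℝ) / μ 1 + ∑ j ∈ Finset.Icc 1 (n - r - 1), (θ j)⁻¹
        ≤ ∑ i ∈ Finset.Icc 1 (n - 1), (μ i)⁻¹ ∧
      ∑ i ∈ Finset.Icc 1 (n - 1), (μ i)⁻¹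
        ≤ (∑ j ∈ Finset.Icc (r + 1) (n - 1), (θ j)⁻¹) + (r : ℝ) / μ (n - 1) := by

  have hsplitμ : ∑ i ∈ Finset.Icc 1 (n - 1), (μ i)⁻¹
      = (∑ i ∈ Finset.Icc 1 r, (μ i)⁻¹) + ∑ i ∈ Finset.Icc (r + 1) (n - 1), (μ i)⁻¹ := by
    rw [← Finset.sum_union]
    · congr 1
      ext x
      simp only [Finset.mem_union, Finset.mem_Icc]
      omega
    · rw [Finset.disjoint_left]
      intro a ha hb
      simp only [Finset.mem_Icc] at ha hb
      omega
  have hsplitμ' : ∑ i ∈ Finset.Icc 1 (n - 1), (μ i)⁻¹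
      = (∑ i ∈ Finset.Icc 1 (n - 1 - r), (μ i)⁻¹)
        + ∑ i ∈ Finset.Icc (n - r) (n - 1), (μ i)⁻¹ := by
    rw [← Finset.sum_union]
    · congr 1
      ext x
      simp only [Finset.mem_union, Finset.mem_Icc]
      omega
    · rw [Finset.disjoint_left]
      intro a ha hb
      simp only [Finset.mem_Icc] at ha hb
      omega
  have hreidx : ∑ i ∈ Finset.Icc (r + 1) (n - 1), (θ (i - r))⁻¹
      = ∑ j ∈ Finset.Icc 1 (n - r - 1), (θ j)⁻¹ := by
    apply Finset.sum_nbij' (fun i => i - r) (fun j => j + r)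
    · intro a ha; simp only [Finset.mem_Icc] at ha ⊢; omega
    · intro a ha; simp only [Finset.mem_Icc] at ha ⊢; omega
    · intro a ha; simp only [Finset.mem_Icc] at ha; omega
    · intro a ha; simp only [Finset.mem_Icc] at ha; omega
    · intro a ha; rfl
  have hreidx2 : ∑ i ∈ Finset.Icc 1 (n - 1 - r), (θ (i + r))⁻¹
      = ∑ j ∈ Finset.Icc (r + 1) (n - 1), (θ j)⁻¹ := by
    apply Finset.sum_nbij' (fun i => i + r) (fun j => j - r)
    · intro a ha; simp only [Finset.mem_Icc] at ha ⊢; omega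
    · intro a ha; simp only [Finset.mem_Icc] at ha ⊢; omega
    · intro a ha; simp only [Finset.mem_Icc] at ha; omega
    · intro a ha; simp only [Finset.mem_Icc] at ha; omega
    · intro a ha; rfl
  constructor
  · -- lower bound
    rw [hsplitμ]
    apply add_le_add
    · -- r / μ 1 ≤ ∑ i ∈ Icc 1 r, (μ i)⁻¹
      have : (r : ℝ) / μ 1 = ∑ _i ∈ Finset.Icc 1 r, (μ 1)⁻¹ := by
        rw [Finset.sum_const, Nat.card_Icc, div_eq_mul_inv]
        simp
      rw [this]
      apply Finset.sum_le_sum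
      intro i hi
      simp only [Finset.mem_Icc] at hi
      exact inv_anti₀ (hμpos i hi.1 (by omega)) (hμsort 1 i (le_refl 1) hi.1 (by omega))
    · -- ∑ θ part
      rw [← hreidx]
      apply Finset.sum_le_sum
      intro i hi
      simp only [Finset.mem_Icc] at hi
      have h1 : μ ((i - r) + r) ≤ θ (i - r) := (hinter (i - r) (by omega) (by omega)).2
      rw [Nat.sub_add_cancel (by omega)] at h1
      exact inv_anti₀ (hμpos i (by omega) (by omega)) h1
  · -- upper bound
    rw [hsplitμ']
    apply add_le_add
    · rw [← hreidx2]
      apply Finset.sum_le_sum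
      intro i hi
      simp only [Finset.mem_Icc] at hi
      have h1 : θ (i + r) ≤ μ ((i + r) - r) := (hinter (i + r) (by omega) (by omega)).1
      rw [Nat.add_sub_cancel] at h1
      exact inv_anti₀ (hθpos (i + r) (by omega) (by omega)) h1
    · have hc : ((r : ℝ)) / μ (n - 1) = ∑ _i ∈ Finset.Icc (n - r) (n - 1), (μ (n - 1))⁻¹ := by
        rw [Finset.sum_const, Nat.card_Icc, div_eq_mul_inv]
        have : n - 1 + 1 - (n - r) = r := by omega
        rw [this]
        simp
      rw [hc]
      apply Finset.sum_le_sum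
      intro i hi
      simp only [Finset.mem_Icc] at hi
      exact inv_anti₀ (hμpos (n - 1) (by omega) (le_refl _))
        (hμsort i (n - 1) (by omega) (by omega) (by omega))
end

section
/- Let G be a connected graph and H a connected spanning subgraph obtained by deleting a single edge. Then K(H) - 1/θ_{n-1} + 1/μ_1 ≤ K(G) ≤ K(H) - 1/θ_1 + 1/μ_{n-1}, where μ_1 ≥ ... ≥ μ_{n-1} > μ_n = 0 are the normalized Laplacian eigenvalues of G and θ_1 ≥ ... ≥ θ_{n-1} > θ_n = 0 those of H. -/
open Finset

/-!
Interlacing `μ_{i+1} ≤ θ_i` and `θ_{i+1} ≤ μ_i` pairs every eigenvalue of one graph with an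
eigenvalue of the other one index further along; dropping one extreme term from each Kemeny
constant, the remaining reciprocals compare termwise.
-/

theorem sum_Icc_sub_last_le_sum_Icc_sub_first {M : Type*} [AddCommGroup M] [PartialOrder M]
    [IsOrderedAddMonoid M] {a b : ℕ → M} {N : ℕ} (hN : 1 ≤ N)
    (h : ∀ i ∈ Ico 1 N, a i ≤ b (i + 1)) :
    ∑ i ∈ Icc 1 N, a i - a N ≤ ∑ i ∈ Icc 1 N, b i - b 1 := by
  have ha : ∑ i ∈ Icc 1 N, a i - a N = ∑ i ∈ Ico 1 N, a i := by
    rw [← Ico_add_one_right_eq_Icc, sum_Ico_succ_top hN, add_sub_cancel_right]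
  have hb : ∑ i ∈ Icc 1 N, b i - b 1 = ∑ i ∈ Ico 1 N, b (i + 1) := by
    rw [← Ico_add_one_right_eq_Icc, sum_eq_sum_Ico_succ_bot (by omega), add_sub_cancel_left,
      sum_Ico_add']
  rw [ha, hb]
  exact sum_le_sum h

theorem kemeny_one_edge_deletion_bounds_general (n : ℕ) (hn : 2 ≤ n)
    (μ θ : ℕ → ℝ)
    (hμpos : ∀ i, 1 ≤ i → i ≤ n - 1 → 0 < μ i)
    (hθpos : ∀ i, 1 ≤ i → i ≤ n - 1 → 0 < θ i)
    (hinter : ∀ i, 1 ≤ i → i ≤ n → θ i ≤ μ (i - 1) ∧ μ (i + 1) ≤ θ i)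
    (KG KH : ℝ)
    (hKG : KG = ∑ i ∈ Finset.Icc 1 (n - 1), (μ i)⁻¹)
    (hKH : KH = ∑ j ∈ Finset.Icc 1 (n - 1), (θ j)⁻¹) :
    KH - (θ (n - 1))⁻¹ + (μ 1)⁻¹ ≤ KG ∧ KG ≤ KH - (θ 1)⁻¹ + (μ (n - 1))⁻¹ := by
  have hN : 1 ≤ n - 1 := by omega
  have lower := sum_Icc_sub_last_le_sum_Icc_sub_first (a := fun i ↦ (θ i)⁻¹)
    (b := fun i ↦ (μ i)⁻¹) hN fun i hi ↦ by
      rw [mem_Ico] at hi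
      exact inv_anti₀ (hμpos (i + 1) (by omega) (by omega)) (hinter i hi.1 (by omega)).2
  have upper := sum_Icc_sub_last_le_sum_Icc_sub_first (a := fun i ↦ (μ i)⁻¹)
    (b := fun i ↦ (θ i)⁻¹) hN fun i hi ↦ by
      rw [mem_Ico] at hi
      have hθμ := (hinter (i + 1) (by omega) (by omega)).1
      rw [Nat.add_sub_cancel] at hθμ
      exact inv_anti₀ (hθpos (i + 1) (by omega) (by omega)) hθμ
  subst hKG hKH
  constructor <;> linarith

/-- Corollary 5.10: let `G` be a connected graph and `H` a connected spanning subgraph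
obtained by deleting a single edge. With normalized Laplacian eigenvalues
`μ₁ ≥ ... ≥ μ_{n-1} > μₙ = 0` of `G` and `θ₁ ≥ ... ≥ θ_{n-1} > θₙ = 0` of `H`
(convention `μ₀ = 2`, `μᵢ = 0` for `i ≥ n+1`) and edge interlacing `μ_{i-1} ≥ θᵢ ≥ μ_{i+1}`,
one has `K(H) - 1/θ_{n-1} + 1/μ₁ ≤ K(G) ≤ K(H) - 1/θ₁ + 1/μ_{n-1}`, where `K` is the sum
of reciprocals of the nonzero normalized Laplacian eigenvalues. -/
theorem kemeny_one_edge_deletion_bounds (n : ℕ) (hn : 2 ≤ n)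
    (μ θ : ℕ → ℝ)
    (hμconv0 : μ 0 = 2) (hθconv0 : θ 0 = 2)
    (hμconvhigh : ∀ i, n + 1 ≤ i → μ i = 0) (hθconvhigh : ∀ i, n + 1 ≤ i → θ i = 0)
    (hμn : μ n = 0) (hθn : θ n = 0)
    (hμsort : ∀ i j, 1 ≤ i → i ≤ j → j ≤ n → μ j ≤ μ i)
    (hθsort : ∀ i j, 1 ≤ i → i ≤ j → j ≤ n → θ j ≤ θ i)
    (hμpos : ∀ i, 1 ≤ i → i ≤ n - 1 → 0 < μ i)
    (hθpos : ∀ i, 1 ≤ i → i ≤ n - 1 → 0 < θ i)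
    (hμle2 : ∀ i, μ i ≤ 2) (hθle2 : ∀ i, θ i ≤ 2)
    (hinter : ∀ i, 1 ≤ i → i ≤ n → θ i ≤ μ (i - 1) ∧ μ (i + 1) ≤ θ i)
    (KG KH : ℝ)
    (hKG : KG = ∑ i ∈ Finset.Icc 1 (n - 1), (μ i)⁻¹)
    (hKH : KH = ∑ j ∈ Finset.Icc 1 (n - 1), (θ j)⁻¹) :
    KH - (θ (n - 1))⁻¹ + (μ 1)⁻¹ ≤ KG ∧ KG ≤ KH - (θ 1)⁻¹ + (μ (n - 1))⁻¹ :=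
  kemeny_one_edge_deletion_bounds_general n hn μ θ hμpos hθpos hinter KG KH hKG hKH
end
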